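/- arXiv:hep-th/0203169 — 11 statements merged into one kernel-verified Lean document; each statement's English description precedes it below -/
import Mathlib

section
/- Let Λ > 0 and let p₀ ∈ (0, π/2) be defined by cos p₀ = 1/cosh(2Λ). For an integer m ≥ 0 define G(m) = (1/(4π²)) ∫_{−Λ}^{Λ}∫_{−Λ}^{Λ} ( φ(λ₁)^m φ(λ₂)^{−m} + φ(λ₁)^{−m} φ(λ₂)^m − 2 ) / sinh²(λ₁ − λ₂) dλ₁ dλ₂ (the integrand has a removable singularity at λ₁ = λ₂ and G(0) = 0). Then for every integer m ≥ 1, the second lattice derivative satisfies G(m+1) + G(m−1) − 2G(m) = −(1/(π² m²)) (1 − cos(2 m p₀)). -/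
/-!
Write `u = φ(x)`, `v = φ(y)`. The integrand of `G(m)` is `((u/v)^m + (v/u)^m - 2) / sinh²(x - y)`,
and for `w ≠ 0` the second difference of `m ↦ w^m + w^(-m)` is `(w^m + w^(-m)) (w + w⁻¹ - 2)`.
With `w = u/v` the last factor is `(u - v)² / (u v)`, and the identities
`φ(x) - φ(y) = i sinh(x - y) / (sinh(x + iπ/4) sinh(y + iπ/4))`,
`2 sinh(x - iπ/4) sinh(x + iπ/4) = cosh 2x` turn `(u - v)² / (u v sinh²(x - y))` into
`-4 / (cosh 2x cosh 2y)`. So the second difference of the integrand has no singularity left and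
separates into products of the weights `φ(x)^{±m} / cosh 2x`. These integrate in closed form since
`φ'/φ = 2i / cosh 2x`; with `φ(-Λ) = φ(Λ)⁻¹` and `φ(Λ) = -e^{±ip₀}` they produce `cos 2mp₀`.
The same recursion, started from the zero kernel at `m = 0`, shows that every integrand agrees off
the diagonal with a continuous function, which supplies the integrability needed to split the
double integrals.
-/

open Real MeasureTheory

noncomputable def phi (z : ℂ) : ℂ :=
  Complex.sinh (z - Complex.I * (π : ℂ) / 4) / Complex.sinh (z + Complex.I * (π : ℂ) / 4)

theorem zpow_add_zpow_neg_second_diff {K : Type*} [Field K] {w : K} (hw : w ≠ 0) (n : ℤ) :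
    (w ^ (n + 1) + w ^ (-(n + 1)) - 2) + (w ^ (n - 1) + w ^ (-(n - 1)) - 2) -
        2 * (w ^ n + w ^ (-n) - 2) = (w ^ n + w ^ (-n)) * (w + w⁻¹ - 2) := by
  rw [show -(n + 1) = -n - 1 by ring, show -(n - 1) = -n + 1 by ring]
  simp only [zpow_add_one₀ hw, zpow_sub_one₀ hw]
  ring

theorem zpow_sub_zpow_neg_sq {K : Type*} [Field K] {w : K} (hw : w ≠ 0) (n : ℤ) :
    (w ^ n - w ^ (-n)) ^ 2 = (w ^ 2) ^ n + (w ^ 2) ^ (-n) - 2 := by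
  have hsq (k : ℤ) : (w ^ 2) ^ k = (w ^ k) ^ 2 := by
    rw [← zpow_natCast w 2, ← zpow_mul, mul_comm, zpow_mul, zpow_natCast]
  have hn := zpow_ne_zero n hw
  rw [hsq, hsq, zpow_neg]
  field_simp
  ring

namespace intervalIntegral

variable {E 𝕜 : Type*} [NormedAddCommGroup E] [NormedSpace ℝ E] [RCLike 𝕜] {a b c d : ℝ}

theorem integral_integral_congr_of_ne {f g : ℝ → ℝ → E} (h : ∀ x y, x ≠ y → f x y = g x y) :
    ∫ x in a..b, ∫ y in c..d, f x y = ∫ x in a..b, ∫ y in c..d, g x y :=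
  integral_congr fun x _ => integral_congr_ae <|
    (volume.ae_ne x).mono fun y hy _ => h x y hy.symm

theorem intervalIntegrable_integral_of_continuous {f : ℝ × ℝ → E} (hf : Continuous f) :
    IntervalIntegrable (fun x => ∫ y in c..d, f (x, y)) volume a b :=
  (continuous_parametric_intervalIntegral_of_continuous' (f := fun x y => f (x, y)) hf c d
    ).intervalIntegrable a b

theorem integral_integral_add {f g : ℝ × ℝ → E} (hf : Continuous f) (hg : Continuous g) :
    ∫ x in a..b, ∫ y in c..d, (f (x, y) + g (x, y)) =
      (∫ x in a..b, ∫ y in c..d, f (x, y)) + ∫ x in a..b, ∫ y in c..d, g (x, y) := by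
  rw [← integral_add (intervalIntegrable_integral_of_continuous hf)
    (intervalIntegrable_integral_of_continuous hg)]
  exact integral_congr fun x _ => integral_add
    ((hf.comp (.prodMk_right x)).intervalIntegrable c d)
    ((hg.comp (.prodMk_right x)).intervalIntegrable c d)

theorem integral_integral_sub {f g : ℝ × ℝ → E} (hf : Continuous f) (hg : Continuous g) :
    ∫ x in a..b, ∫ y in c..d, (f (x, y) - g (x, y)) =
      (∫ x in a..b, ∫ y in c..d, f (x, y)) - ∫ x in a..b, ∫ y in c..d, g (x, y) := by
  rw [← integral_sub (intervalIntegrable_integral_of_continuous hf)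
    (intervalIntegrable_integral_of_continuous hg)]
  exact integral_congr fun x _ => integral_sub
    ((hf.comp (.prodMk_right x)).intervalIntegrable c d)
    ((hg.comp (.prodMk_right x)).intervalIntegrable c d)

theorem integral_integral_const_mul (r : 𝕜) (f : ℝ → ℝ → 𝕜) :
    ∫ x in a..b, ∫ y in c..d, r * f x y = r * ∫ x in a..b, ∫ y in c..d, f x y := by
  simp only [integral_const_mul]

theorem integral_integral_mul (f g : ℝ → 𝕜) :
    ∫ x in a..b, ∫ y in c..d, f x * g y = (∫ x in a..b, f x) * ∫ y in c..d, g y := by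
  simp only [integral_const_mul, integral_mul_const]

end intervalIntegral

theorem Complex.two_mul_sinh_mul_sinh (a b : ℂ) :
    2 * Complex.sinh a * Complex.sinh b = Complex.cosh (a + b) - Complex.cosh (a - b) := by
  rw [Complex.cosh_add, Complex.cosh_sub]; ring

theorem Complex.cosh_I_mul_pi_div_two : Complex.cosh (Complex.I * π / 2) = 0 := by
  rw [mul_comm, mul_div_right_comm, Complex.cosh_mul_I, Complex.cos_pi_div_two]

theorem Complex.sinh_I_mul_pi_div_two : Complex.sinh (Complex.I * π / 2) = Complex.I := by
  rw [mul_comm, mul_div_right_comm, Complex.sinh_mul_I, Complex.sin_pi_div_two, one_mul]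

theorem two_mul_sinh_sub_mul_sinh_add (z : ℂ) :
    2 * Complex.sinh (z - Complex.I * π / 4) * Complex.sinh (z + Complex.I * π / 4) =
      Complex.cosh (2 * z) := by
  rw [Complex.two_mul_sinh_mul_sinh, ← Complex.cosh_neg (_ - _),
    show -(z - Complex.I * π / 4 - (z + Complex.I * π / 4)) = Complex.I * π / 2 by ring,
    Complex.cosh_I_mul_pi_div_two, sub_zero]
  ring_nf

theorem sinh_sub_mul_sinh_add_sub_sinh_sub_mul_sinh_add (z w : ℂ) :
    Complex.sinh (z - Complex.I * π / 4) * Complex.sinh (w + Complex.I * π / 4) -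
        Complex.sinh (w - Complex.I * π / 4) * Complex.sinh (z + Complex.I * π / 4) =
      Complex.I * Complex.sinh (z - w) := by
  have h₁ := Complex.two_mul_sinh_mul_sinh (z - Complex.I * π / 4) (w + Complex.I * π / 4)
  have h₂ := Complex.two_mul_sinh_mul_sinh (w - Complex.I * π / 4) (z + Complex.I * π / 4)
  rw [show z - Complex.I * π / 4 + (w + Complex.I * π / 4) = z + w by ring,
    show z - Complex.I * π / 4 - (w + Complex.I * π / 4) = (z - w) - Complex.I * π / 2 by ring,
    Complex.cosh_sub] at h₁
  rw [show w - Complex.I * π / 4 + (z + Complex.I * π / 4) = z + w by ring,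
    show w - Complex.I * π / 4 - (z + Complex.I * π / 4) = -((z - w) + Complex.I * π / 2) by ring,
    Complex.cosh_neg, Complex.cosh_add (z - w)] at h₂
  rw [Complex.cosh_I_mul_pi_div_two, Complex.sinh_I_mul_pi_div_two] at h₁ h₂
  linear_combination (h₁ - h₂) / 2

theorem cosh_sub_mul_sinh_add_sub_sinh_sub_mul_cosh_add (z : ℂ) :
    Complex.cosh (z - Complex.I * π / 4) * Complex.sinh (z + Complex.I * π / 4) -
        Complex.sinh (z - Complex.I * π / 4) * Complex.cosh (z + Complex.I * π / 4) =
      Complex.I := by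
  have h := Complex.sinh_sub (z + Complex.I * π / 4) (z - Complex.I * π / 4)
  rw [show z + Complex.I * π / 4 - (z - Complex.I * π / 4) = Complex.I * π / 2 by ring,
    Complex.sinh_I_mul_pi_div_two] at h
  linear_combination -h

theorem cosh_two_mul_ofReal_ne_zero (x : ℝ) : Complex.cosh (2 * x) ≠ 0 := by
  rw [← Complex.ofReal_ofNat, ← Complex.ofReal_mul, ← Complex.ofReal_cosh]
  exact Complex.ofReal_ne_zero.mpr (Real.cosh_pos _).ne'

theorem sinh_sub_ne_zero_and_sinh_add_ne_zero (x : ℝ) :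
    Complex.sinh (x - Complex.I * π / 4) ≠ 0 ∧ Complex.sinh (x + Complex.I * π / 4) ≠ 0 := by
  have h := two_mul_sinh_sub_mul_sinh_add x ▸ cosh_two_mul_ofReal_ne_zero x
  simp only [mul_ne_zero_iff] at h
  exact ⟨h.1.2, h.2⟩

theorem phi_neg (z : ℂ) : phi (-z) = (phi z)⁻¹ := by
  rw [phi, phi, inv_div, show -z - Complex.I * π / 4 = -(z + Complex.I * π / 4) by ring,
    show -z + Complex.I * π / 4 = -(z - Complex.I * π / 4) by ring, Complex.sinh_neg,
    Complex.sinh_neg, neg_div_neg_eq]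

theorem phi_ofReal (x : ℝ) :
    phi x = -(1 + Complex.I * Real.sinh (2 * x)) / Real.cosh (2 * x) := by
  obtain ⟨hm, -⟩ := sinh_sub_ne_zero_and_sinh_add_ne_zero x
  have h := Complex.cosh_two_mul (x - Complex.I * π / 4)
  rw [Complex.cosh_sq, show 2 * (x - Complex.I * π / 4) = 2 * x - Complex.I * π / 2 by ring,
    Complex.cosh_sub, Complex.cosh_I_mul_pi_div_two, Complex.sinh_I_mul_pi_div_two] at h
  rw [Complex.ofReal_sinh, Complex.ofReal_cosh, Complex.ofReal_mul, Complex.ofReal_ofNat,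
    ← two_mul_sinh_sub_mul_sinh_add, phi,
    ← mul_div_mul_left _ _ (mul_ne_zero two_ne_zero hm)]
  congr 1
  linear_combination -h

theorem phi_ofReal_ne_zero (x : ℝ) : phi x ≠ 0 :=
  div_ne_zero (sinh_sub_ne_zero_and_sinh_add_ne_zero x).1
    (sinh_sub_ne_zero_and_sinh_add_ne_zero x).2

theorem phi_ofReal_eq_neg_exp {x p : ℝ} (hcos : Real.cos p = 1 / Real.cosh (2 * x)) :
    phi x = -Complex.exp (p * Complex.I) ∨ phi x = -Complex.exp ((-p : ℝ) * Complex.I) := by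
  have hch := (Real.cosh_pos (2 * x)).ne'
  have hsin : Real.sin p ^ 2 = (Real.sinh (2 * x) * Real.cos p) ^ 2 := by
    rw [Real.sin_sq, hcos]
    field_simp
    linear_combination Real.cosh_sq (2 * x)
  rw [phi_ofReal, Complex.exp_mul_I, Complex.exp_mul_I, ← Complex.ofReal_cos,
    ← Complex.ofReal_sin, ← Complex.ofReal_cos, ← Complex.ofReal_sin, Real.cos_neg, Real.sin_neg,
    hcos]
  refine (sq_eq_sq_iff_eq_or_eq_neg.1 hsin).imp (fun h => ?_) (fun h => ?_) <;>
  · rw [h, hcos]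
    push_cast
    field_simp

theorem phi_ofReal_zpow_sub_zpow_neg_sq {x p : ℝ} (hcos : Real.cos p = 1 / Real.cosh (2 * x))
    (n : ℤ) : (phi x ^ n - phi x ^ (-n)) ^ 2 = 2 * Real.cos (2 * n * p) - 2 := by
  obtain ⟨θ, hθ, hφ⟩ : ∃ θ : ℝ, Real.cos (2 * n * θ) = Real.cos (2 * n * p) ∧
      phi x = -Complex.exp (θ * Complex.I) := by
    rcases phi_ofReal_eq_neg_exp hcos with h | h
    · exact ⟨p, rfl, h⟩
    · exact ⟨-p, by rw [mul_neg, Real.cos_neg], h⟩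
  rw [zpow_sub_zpow_neg_sq (phi_ofReal_ne_zero x), hφ, neg_sq, ← Complex.exp_nat_mul,
    ← Complex.exp_int_mul, ← Complex.exp_int_mul, ← hθ, Complex.ofReal_cos, Complex.two_cos]
  push_cast
  ring_nf

theorem hasDerivAt_phi {z : ℂ} (hm : Complex.sinh (z - Complex.I * π / 4) ≠ 0)
    (hp : Complex.sinh (z + Complex.I * π / 4) ≠ 0) :
    HasDerivAt phi (2 * Complex.I * phi z / Complex.cosh (2 * z)) z := by
  have hd (c : ℂ) : HasDerivAt (fun w => Complex.sinh (w + c)) (Complex.cosh (z + c)) z := by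
    simpa using ((hasDerivAt_id z).add_const c).csinh
  have hm' := hd (-(Complex.I * π / 4))
  simp only [← sub_eq_add_neg] at hm'
  refine (hm'.div (hd _) hp).congr_deriv ?_
  rw [cosh_sub_mul_sinh_add_sub_sinh_sub_mul_cosh_add, ← two_mul_sinh_sub_mul_sinh_add, phi]
  generalize Complex.sinh (z - Complex.I * π / 4) = a at hm ⊢
  generalize Complex.sinh (z + Complex.I * π / 4) = b at hp ⊢
  field_simp

theorem hasDerivAt_phi_ofReal (x : ℝ) :
    HasDerivAt phi (2 * Complex.I * phi x / Complex.cosh (2 * x)) x :=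
  hasDerivAt_phi (sinh_sub_ne_zero_and_sinh_add_ne_zero x).1
    (sinh_sub_ne_zero_and_sinh_add_ne_zero x).2

theorem continuous_phi_ofReal : Continuous fun t : ℝ => phi t :=
  continuous_iff_continuousAt.2 fun x => (hasDerivAt_phi_ofReal x).comp_ofReal.continuousAt

theorem sub_phi_sq_mul_cosh_mul_cosh {z w : ℂ} (hz : Complex.sinh (z + Complex.I * π / 4) ≠ 0)
    (hw : Complex.sinh (w + Complex.I * π / 4) ≠ 0) :
    (phi z - phi w) ^ 2 * Complex.cosh (2 * z) * Complex.cosh (2 * w) =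
      -4 * phi z * phi w * Complex.sinh (z - w) ^ 2 := by
  have hdiff : phi z - phi w = Complex.I * Complex.sinh (z - w) /
      (Complex.sinh (z + Complex.I * π / 4) * Complex.sinh (w + Complex.I * π / 4)) := by
    rw [phi, phi, div_sub_div _ _ hz hw, mul_comm (Complex.sinh (z + _)),
      sinh_sub_mul_sinh_add_sub_sinh_sub_mul_sinh_add]
  rw [hdiff, ← two_mul_sinh_sub_mul_sinh_add, ← two_mul_sinh_sub_mul_sinh_add, phi, phi]
  generalize Complex.sinh (z + Complex.I * π / 4) = a at hz ⊢
  generalize Complex.sinh (w + Complex.I * π / 4) = b at hw ⊢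
  generalize Complex.sinh (z - Complex.I * π / 4) = c
  generalize Complex.sinh (w - Complex.I * π / 4) = d
  field_simp
  linear_combination (4 * Complex.sinh (z - w) ^ 2 * c * d) * Complex.I_sq

noncomputable def phiWeight (n : ℤ) (x : ℝ) : ℂ := phi x ^ n / Complex.cosh (2 * x)

@[fun_prop]
theorem continuous_phiWeight (n : ℤ) : Continuous (phiWeight n) :=
  (continuous_phi_ofReal.zpow₀ n fun x => .inl (phi_ofReal_ne_zero x)).div (by fun_prop)
    cosh_two_mul_ofReal_ne_zero

theorem hasDerivAt_phi_ofReal_zpow (n : ℤ) (x : ℝ) :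
    HasDerivAt (fun t : ℝ => phi t ^ n) (2 * n * Complex.I * phiWeight n x) x := by
  refine ((hasDerivAt_zpow n _ (.inl (phi_ofReal_ne_zero x))).comp (x : ℂ)
    (hasDerivAt_phi_ofReal x)).comp_ofReal.congr_deriv ?_
  have hx := phi_ofReal_ne_zero x
  rw [phiWeight, zpow_sub_one₀ hx]
  field_simp

theorem integral_phiWeight {n : ℤ} (hn : n ≠ 0) (a b : ℝ) :
    ∫ x in a..b, phiWeight n x = (phi b ^ n - phi a ^ n) / (2 * n * Complex.I) := by
  have h2nI : 2 * (n : ℂ) * Complex.I ≠ 0 := by simp [hn]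
  rw [intervalIntegral.integral_eq_sub_of_hasDerivAt
    (f := fun t : ℝ => phi t ^ n / (2 * n * Complex.I))
    (fun x _ => ((hasDerivAt_phi_ofReal_zpow n x).div_const _).congr_deriv
      (mul_div_cancel_left₀ _ h2nI)) ((continuous_phiWeight n).intervalIntegrable a b), sub_div]

theorem integral_phiWeight_mul_integral_phiWeight_neg {Λ p : ℝ}
    (hcos : Real.cos p = 1 / Real.cosh (2 * Λ)) {n : ℤ} (hn : n ≠ 0) :
    (∫ x in -Λ..Λ, phiWeight n x) * (∫ x in -Λ..Λ, phiWeight (-n) x) =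
      (1 - Real.cos (2 * n * p)) / (2 * n ^ 2) := by
  have h := phi_ofReal_zpow_sub_zpow_neg_sq hcos n
  have hn' : (n : ℂ) ≠ 0 := Int.cast_ne_zero.2 hn
  rw [integral_phiWeight hn, integral_phiWeight (neg_ne_zero.2 hn), Complex.ofReal_neg, phi_neg,
    inv_zpow', inv_zpow', neg_neg, ← neg_sub (phi Λ ^ n), Int.cast_neg]
  generalize phi Λ ^ n - phi Λ ^ (-n) = A at h
  field_simp
  linear_combination h - 2 * (1 - (Real.cos (2 * n * p) : ℂ)) * Complex.I_sq

noncomputable def phiKernel (n : ℤ) (x y : ℝ) : ℂ :=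
  (phi x ^ n * phi y ^ (-n) + phi x ^ (-n) * phi y ^ n - 2) / Complex.sinh (x - y) ^ 2

theorem phiKernel_zero (x y : ℝ) : phiKernel 0 x y = 0 := by
  norm_num [phiKernel]

theorem phiKernel_neg (n : ℤ) (x y : ℝ) : phiKernel (-n) x y = phiKernel n x y := by
  rw [phiKernel, phiKernel, neg_neg, add_comm (phi x ^ (-n) * _)]

theorem phiKernel_eq_div (n : ℤ) (x y : ℝ) :
    phiKernel n x y =
      ((phi x / phi y) ^ n + (phi x / phi y) ^ (-n) - 2) / Complex.sinh (x - y) ^ 2 := by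
  simp only [phiKernel, div_zpow, zpow_neg, inv_div]
  ring

theorem phiKernel_second_diff (n : ℤ) {x y : ℝ} (hxy : x ≠ y) :
    phiKernel (n + 1) x y + phiKernel (n - 1) x y - 2 * phiKernel n x y =
      -4 * (phiWeight n x * phiWeight (-n) y + phiWeight (-n) x * phiWeight n y) := by
  have hx := phi_ofReal_ne_zero x
  have hy := phi_ofReal_ne_zero y
  have hs : Complex.sinh (x - y) ≠ 0 := by
    rw [← Complex.ofReal_sub, ← Complex.ofReal_sinh, Complex.ofReal_ne_zero]
    exact Real.sinh_ne_zero.2 (sub_ne_zero.2 hxy)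
  have hCx := cosh_two_mul_ofReal_ne_zero x
  have hCy := cosh_two_mul_ofReal_ne_zero y
  have h := sub_phi_sq_mul_cosh_mul_cosh (sinh_sub_ne_zero_and_sinh_add_ne_zero x).2
    (sinh_sub_ne_zero_and_sinh_add_ne_zero y).2
  have hsum (a b c s : ℂ) : a / s + b / s - 2 * (c / s) = (a + b - 2 * c) / s := by ring
  have key : (phi x / phi y + (phi x / phi y)⁻¹ - 2) / Complex.sinh (x - y) ^ 2 =
      -4 / (Complex.cosh (2 * x) * Complex.cosh (2 * y)) := by
    rw [div_eq_div_iff (pow_ne_zero 2 hs) (mul_ne_zero hCx hCy)]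
    field_simp
    linear_combination h
  rw [phiKernel_eq_div, phiKernel_eq_div, phiKernel_eq_div, hsum,
    zpow_add_zpow_neg_second_diff (div_ne_zero hx hy), mul_div_assoc, key]
  simp only [phiWeight, div_zpow, zpow_neg]
  field_simp

theorem exists_continuous_eq_phiKernel :
    ∀ n : ℕ, ∃ g : ℝ × ℝ → ℂ, Continuous g ∧ ∀ x y, x ≠ y → phiKernel n x y = g (x, y)
  | 0 => ⟨0, continuous_const, fun x y _ => phiKernel_zero x y⟩
  | 1 => by
    refine ⟨fun p => -4 * (phiWeight 0 p.1 * phiWeight 0 p.2), by fun_prop, fun x y hxy => ?_⟩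
    have h := phiKernel_second_diff 0 hxy
    rw [zero_add, zero_sub, phiKernel_neg, phiKernel_zero, neg_zero] at h
    push_cast
    linear_combination h / 2
  | n + 2 => by
    obtain ⟨g₀, hg₀, h₀⟩ := exists_continuous_eq_phiKernel n
    obtain ⟨g₁, hg₁, h₁⟩ := exists_continuous_eq_phiKernel (n + 1)
    refine ⟨fun p => -4 * (phiWeight (n + 1) p.1 * phiWeight (-(n + 1)) p.2 +
      phiWeight (-(n + 1)) p.1 * phiWeight (n + 1) p.2) - g₀ p + 2 * g₁ p, by fun_prop,
      fun x y hxy => ?_⟩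
    have h := phiKernel_second_diff ((n : ℤ) + 1) hxy
    rw [add_sub_cancel_right, add_assoc, one_add_one_eq_two] at h
    push_cast at h₀ h₁ ⊢
    linear_combination h - h₀ x y hxy + 2 * h₁ x y hxy

theorem integral_integral_phiKernel_second_diff {m : ℕ} (hm : 1 ≤ m) (a b : ℝ) :
    (∫ x in a..b, ∫ y in a..b, phiKernel (m + 1 : ℕ) x y) +
        (∫ x in a..b, ∫ y in a..b, phiKernel (m - 1 : ℕ) x y) -
        2 * ∫ x in a..b, ∫ y in a..b, phiKernel m x y =
      -8 * ((∫ x in a..b, phiWeight m x) * ∫ x in a..b, phiWeight (-m) x) := by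
  obtain ⟨gs, hgs, hs⟩ := exists_continuous_eq_phiKernel (m + 1)
  obtain ⟨gp, hgp, hp⟩ := exists_continuous_eq_phiKernel (m - 1)
  obtain ⟨g, hg, h⟩ := exists_continuous_eq_phiKernel m
  have hcomb : ∀ x y, x ≠ y → gs (x, y) + gp (x, y) - 2 * g (x, y) =
      -4 * (phiWeight m x * phiWeight (-m) y + phiWeight (-m) x * phiWeight m y) := by
    intro x y hxy
    rw [← hs x y hxy, ← hp x y hxy, ← h x y hxy, Nat.cast_sub hm]
    exact phiKernel_second_diff m hxy
  rw [intervalIntegral.integral_integral_congr_of_ne hs,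
    intervalIntegral.integral_integral_congr_of_ne hp,
    intervalIntegral.integral_integral_congr_of_ne h,
    ← intervalIntegral.integral_integral_add hgs hgp,
    ← intervalIntegral.integral_integral_const_mul,
    ← intervalIntegral.integral_integral_sub (f := fun p => gs p + gp p) (g := fun p => 2 * g p)
      (hgs.add hgp) (continuous_const.mul hg),
    intervalIntegral.integral_integral_congr_of_ne hcomb,
    intervalIntegral.integral_integral_const_mul,
    intervalIntegral.integral_integral_add (f := fun p => phiWeight m p.1 * phiWeight (-m) p.2)
      (g := fun p => phiWeight (-m) p.1 * phiWeight m p.2) (by fun_prop) (by fun_prop),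
    intervalIntegral.integral_integral_mul, intervalIntegral.integral_integral_mul]
  ring

theorem stmt1_general (Λ : ℝ) (p₀ : ℝ)
    (hcos : Real.cos p₀ = 1 / Real.cosh (2 * Λ))
    (G : ℕ → ℂ)
    (hG : ∀ m : ℕ, G m = (1 / (4 * (π : ℂ) ^ 2)) *
      ∫ x in (-Λ)..Λ, ∫ y in (-Λ)..Λ,
        (phi (x : ℂ) ^ m * phi (y : ℂ) ^ (-(m : ℤ)) +
          phi (x : ℂ) ^ (-(m : ℤ)) * phi (y : ℂ) ^ m - 2) /
          Complex.sinh ((x : ℂ) - (y : ℂ)) ^ 2)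
    (m : ℕ) (hm : 1 ≤ m) :
    G (m + 1) + G (m - 1) - 2 * G m =
      ((-(1 / (π ^ 2 * (m : ℝ) ^ 2)) * (1 - Real.cos (2 * m * p₀)) : ℝ) : ℂ) := by
  have hG' (k : ℕ) :
      G k = 1 / (4 * (π : ℂ) ^ 2) * ∫ x in -Λ..Λ, ∫ y in -Λ..Λ, phiKernel k x y := by
    simp only [hG, phiKernel, zpow_natCast]
  have hm' : (m : ℤ) ≠ 0 := by omega
  rw [hG', hG', hG', ← mul_add, ← mul_assoc, mul_comm 2, mul_assoc, ← mul_sub,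
    integral_integral_phiKernel_second_diff hm,
    integral_phiWeight_mul_integral_phiWeight_neg hcos hm']
  push_cast
  field_simp
  ring

/-- The second lattice derivative of the double-integral contribution `G(m)` to `⟨Q²_{1,m}⟩`
for the XX chain equals `-(1/(π²m²))(1 - cos 2mp₀)`. -/
theorem stmt1 (Λ : ℝ) (hΛ : 0 < Λ) (p₀ : ℝ) (hp₀ : p₀ ∈ Set.Ioo 0 (π / 2))
    (hcos : Real.cos p₀ = 1 / Real.cosh (2 * Λ))
    (G : ℕ → ℂ)
    (hG : ∀ m : ℕ, G m = (1 / (4 * (π : ℂ) ^ 2)) *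
      ∫ x in (-Λ)..Λ, ∫ y in (-Λ)..Λ,
        (phi (x : ℂ) ^ m * phi (y : ℂ) ^ (-(m : ℤ)) +
          phi (x : ℂ) ^ (-(m : ℤ)) * phi (y : ℂ) ^ m - 2) /
          Complex.sinh ((x : ℂ) - (y : ℂ)) ^ 2)
    (m : ℕ) (hm : 1 ≤ m) :
    G (m + 1) + G (m - 1) - 2 * G m =
      ((-(1 / (π ^ 2 * (m : ℝ) ^ 2)) * (1 - Real.cos (2 * m * p₀)) : ℝ) : ℂ) :=
  stmt1_general Λ p₀ hcos G hG m hm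
end

section
/- Let n ≥ 1 and let x₁,…,xₙ, y₁,…,yₙ be complex numbers such that sinh(x_j − y_k) ≠ 0 for all 1 ≤ j,k ≤ n. Then the determinant of the n×n matrix with entries 1/sinh(x_j − y_k) equals ( ∏_{n ≥ j > k ≥ 1} sinh(x_j − x_k) · sinh(y_k − y_j) ) / ( ∏_{j=1}^n ∏_{k=1}^n sinh(x_j − y_k) ). -/
/-!
The Schur complement of the corner entry of a Cauchy matrix `[(x j - y k)⁻¹]` is again a Cauchy
matrix, with rows and columns rescaled by `(x L - x i) / (x i - y L)` and
`(y j - y L) / (x L - y j)`; this gives the rational Cauchy determinant by induction on `n`.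
Since `sinh (a - b) = (e^{2a}/2 - e^{2b}/2) / (e^a e^b)`, the hyperbolic matrix is the Cauchy
matrix in `e^{2x}/2, e^{2y}/2` rescaled by `e^{x j} e^{y k}`, and the rescaling cancels from the
identity because every index occurs in exactly `n - 1` of the pairs `k < j`.
-/

open Finset

theorem Fin.prod_prod_filter_lt_castSucc {M : Type*} [CommMonoid M] {n : ℕ}
    (f : Fin (n + 1) → Fin (n + 1) → M) :
    ∏ j, ∏ k ∈ univ.filter (· < j), f j k =
      (∏ j : Fin n, ∏ k ∈ univ.filter (· < j), f j.castSucc k.castSucc) *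
        ∏ k : Fin n, f (last n) k.castSucc := by
  simp only [filter_gt_eq_Iio]
  rw [Fin.prod_univ_castSucc, Iio_last_eq_map, prod_map]
  congr 1
  refine prod_congr rfl fun j _ => ?_
  rw [← map_castSuccEmb_Iio, prod_map]
  rfl

theorem Fin.prod_prod_filter_lt_mul_mul_prod {M : Type*} [CommMonoid M] {n : ℕ} (f : Fin n → M) :
    (∏ j, ∏ k ∈ univ.filter (· < j), f j * f k) * ∏ j, f j = (∏ j, f j) ^ n := by
  induction n with
  | zero => simp
  | succ n ih =>
    rw [Fin.prod_prod_filter_lt_castSucc, Fin.prod_univ_castSucc, prod_mul_distrib, prod_const,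
      mul_pow, pow_succ, pow_succ, ← ih]
    ac_rfl

theorem Matrix.det_succ_eq_mul_det_schur {K : Type*} [Field K] {n : ℕ}
    (M : Matrix (Fin (n + 1)) (Fin (n + 1)) K) (h : M (Fin.last n) (Fin.last n) ≠ 0) :
    M.det = M (Fin.last n) (Fin.last n) * (Matrix.of fun i j : Fin n =>
      M i.castSucc j.castSucc -
        M i.castSucc (Fin.last n) * M (Fin.last n) j.castSucc / M (Fin.last n) (Fin.last n)).det := by
  set L := Fin.last n
  -- clear the last column by subtracting multiples of the last row, then expand along it
  let c : Fin (n + 1) → K := fun i => if i = L then 0 else M i L / M L L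
  let B : Matrix (Fin (n + 1)) (Fin (n + 1)) K := Matrix.of fun i j => M i j - c i * M L j
  have hBL : ∀ j, B L j = M L j := by simp [B, c]
  have hB : ∀ i, i ≠ L → B i L = 0 := by
    intro i hi
    simp [B, c, hi, h]
  rw [det_eq_of_forall_row_eq_smul_add_const (B := B) c L (by simp [c])
    (fun i j => by rw [hBL]; simp [B]), det_succ_column B L,
    sum_eq_single L (fun i _ hi => by rw [hB i hi, mul_zero, zero_mul]) (by simp)]
  rw [hBL, ← two_mul, pow_mul, neg_one_sq, one_pow, one_mul, Fin.succAbove_last]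
  congr 2
  ext i j
  simp [B, c, L, (Fin.castSucc_lt_last i).ne, mul_div_right_comm]

theorem Matrix.det_cauchy {K : Type*} [Field K] {n : ℕ} (x y : Fin n → K)
    (h : ∀ j k, x j - y k ≠ 0) :
    (of fun j k => (x j - y k)⁻¹).det =
      (∏ j, ∏ k ∈ univ.filter (· < j), (x j - x k) * (y k - y j)) / ∏ j, ∏ k, (x j - y k) := by
  induction n with
  | zero => simp
  | succ n ih =>
    set L := Fin.last n
    have hschur : (of fun i j : Fin n => (x i.castSucc - y j.castSucc)⁻¹ -
          (x i.castSucc - y L)⁻¹ * (x L - y j.castSucc)⁻¹ / (x L - y L)⁻¹).det =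
        (∏ i : Fin n, (x L - x i.castSucc) / (x i.castSucc - y L)) *
          ((∏ j : Fin n, (y j.castSucc - y L) / (x L - y j.castSucc)) *
            (of fun i j : Fin n => (x i.castSucc - y j.castSucc)⁻¹).det) := by
      rw [← det_mul_row, ← det_mul_column]
      congr 1
      ext i j
      simp only [of_apply]
      field_simp [h]
      ring
    rw [det_succ_eq_mul_det_schur _ (inv_ne_zero (h L L))]
    simp only [of_apply]
    rw [hschur, ih _ _ fun j k => h _ _,
      Fin.prod_prod_filter_lt_castSucc (fun j k => (x j - x k) * (y k - y j)),
      Fin.prod_univ_castSucc fun j => ∏ k, (x j - y k)]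
    simp only [Fin.prod_univ_castSucc (fun k => x _ - y k), prod_mul_distrib, prod_div_distrib]
    field_simp [h]
    ring

theorem Matrix.det_cauchy_rescaled {K : Type*} [Field K] {n : ℕ} (x y u v : Fin n → K)
    (h : ∀ j k, x j - y k ≠ 0) (hu : ∀ j, u j ≠ 0) (hv : ∀ k, v k ≠ 0) :
    (of fun j k => ((x j - y k) / (u j * v k))⁻¹).det =
      (∏ j, ∏ k ∈ univ.filter (· < j), (x j - x k) / (u j * u k) * ((y k - y j) / (v k * v j))) /
        ∏ j, ∏ k, (x j - y k) / (u j * v k) := by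
  have hscale : (of fun j k => ((x j - y k) / (u j * v k))⁻¹).det =
      (∏ j, u j) * ((∏ k, v k) * (of fun j k => (x j - y k)⁻¹).det) := by
    rw [← det_mul_row, ← det_mul_column]
    congr 1
    ext j k
    simp only [of_apply, inv_div]
    ring
  have hnum : ∏ j, ∏ k ∈ univ.filter (· < j), (x j - x k) / (u j * u k) * ((y k - y j) / (v k * v j)) =
      (∏ j, ∏ k ∈ univ.filter (· < j), (x j - x k) * (y k - y j)) /
        ((∏ j, ∏ k ∈ univ.filter (· < j), u j * u k) * ∏ j, ∏ k ∈ univ.filter (· < j), v j * v k) := by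
    rw [← prod_mul_distrib, ← prod_div_distrib]
    refine prod_congr rfl fun j _ => ?_
    rw [← prod_mul_distrib, ← prod_div_distrib]
    refine prod_congr rfl fun k _ => ?_
    ring
  have hden : ∏ j, ∏ k, (x j - y k) / (u j * v k) =
      (∏ j, ∏ k, (x j - y k)) / ((∏ j, u j) ^ n * (∏ k, v k) ^ n) := by
    simp only [prod_div_distrib, prod_mul_distrib, prod_const, card_univ, Fintype.card_fin,
      prod_pow]
  have hU : ∏ j, ∏ k ∈ univ.filter (· < j), u j * u k ≠ 0 := by simp [prod_ne_zero_iff, hu]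
  have hV : ∏ j, ∏ k ∈ univ.filter (· < j), v j * v k ≠ 0 := by simp [prod_ne_zero_iff, hv]
  rw [hscale, hnum, hden, det_cauchy x y h, ← Fin.prod_prod_filter_lt_mul_mul_prod u,
    ← Fin.prod_prod_filter_lt_mul_mul_prod v]
  field_simp

theorem Complex.sinh_sub_eq_div (a b : ℂ) :
    sinh (a - b) = (exp (2 * a) / 2 - exp (2 * b) / 2) / (exp a * exp b) := by
  rw [sinh, exp_sub, neg_sub, exp_sub, two_mul, two_mul, exp_add, exp_add]
  have := exp_ne_zero a
  have := exp_ne_zero b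
  field_simp

theorem stmt3_general (n : ℕ) (x y : Fin n → ℂ)
    (h : ∀ j k, Complex.sinh (x j - y k) ≠ 0) :
    Matrix.det (Matrix.of fun j k => 1 / Complex.sinh (x j - y k)) =
      (∏ j : Fin n, ∏ k ∈ Finset.univ.filter (fun k => k < j),
          Complex.sinh (x j - x k) * Complex.sinh (y k - y j)) /
        ∏ j : Fin n, ∏ k : Fin n, Complex.sinh (x j - y k) := by
  simp only [one_div, Complex.sinh_sub_eq_div] at h ⊢
  exact Matrix.det_cauchy_rescaled _ _ _ _ (fun j k => left_ne_zero_of_mul (h j k))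
    (fun _ => Complex.exp_ne_zero _) (fun _ => Complex.exp_ne_zero _)

/-- Hyperbolic Cauchy determinant identity:
`det [1/sinh(x_j - y_k)] = ∏_{j>k} sinh(x_j-x_k) sinh(y_k-y_j) / ∏_{j,k} sinh(x_j-y_k)`. -/
theorem stmt3 (n : ℕ) (hn : 1 ≤ n) (x y : Fin n → ℂ)
    (h : ∀ j k, Complex.sinh (x j - y k) ≠ 0) :
    Matrix.det (Matrix.of fun j k => 1 / Complex.sinh (x j - y k)) =
      (∏ j : Fin n, ∏ k ∈ Finset.univ.filter (fun k => k < j),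
          Complex.sinh (x j - x k) * Complex.sinh (y k - y j)) /
        ∏ j : Fin n, ∏ k : Fin n, Complex.sinh (x j - y k) :=
  stmt3_general n x y h
end

section
/- Let n ≥ 1 and let x₁,…,xₙ, y₁,…,yₙ be complex numbers such that sinh(2(x_j − y_k)) ≠ 0 for all 1 ≤ j,k ≤ n (equivalently sinh(x_j − y_k) ≠ 0 and cosh(x_j − y_k) ≠ 0). Then det_n[ 1/sinh(2(x_j − y_k)) ] = ( ∏_{n ≥ j > k ≥ 1} cosh(x_j − x_k) cosh(y_k − y_j) ) / ( 2ⁿ ∏_{j,k=1}^n cosh(x_j − y_k) ) · det_n[ 1/sinh(x_j − y_k) ]. -/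
open Finset Polynomial

open Finset Polynomial

lemma key_sinh (u v : ℂ) :
    Complex.exp u ^ 2 - Complex.exp v ^ 2 = 2 * Complex.exp u * Complex.exp v * Complex.sinh (u - v) := by
  have e1 : Complex.exp (u + v) * Complex.exp (u - v) = Complex.exp u ^ 2 := by
    rw [← Complex.exp_add, sq, ← Complex.exp_add]; congr 1; ring
  have e2 : Complex.exp (u + v) * Complex.exp (-(u - v)) = Complex.exp v ^ 2 := by
    rw [← Complex.exp_add, sq, ← Complex.exp_add]; congr 1; ring
  rw [Complex.sinh, ← e1, ← e2, mul_assoc, Complex.exp_add]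
  ring

lemma key_cosh (u v : ℂ) :
    Complex.exp u ^ 2 + Complex.exp v ^ 2 = 2 * Complex.exp u * Complex.exp v * Complex.cosh (u - v) := by
  have e1 : Complex.exp (u + v) * Complex.exp (u - v) = Complex.exp u ^ 2 := by
    rw [← Complex.exp_add, sq, ← Complex.exp_add]; congr 1; ring
  have e2 : Complex.exp (u + v) * Complex.exp (-(u - v)) = Complex.exp v ^ 2 := by
    rw [← Complex.exp_add, sq, ← Complex.exp_add]; congr 1; ring
  rw [Complex.cosh, ← e1, ← e2, mul_assoc, Complex.exp_add]
  ring

lemma pair_swap {n : ℕ} (f : Fin n → Fin n → ℂ) :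
    (∏ j : Fin n, ∏ k ∈ Iio j, f j k) = ∏ i : Fin n, ∏ j ∈ Ioi i, f j i := by
  refine Finset.prod_comm' fun x y => ?_
  simp [mem_Iio, mem_Ioi]

lemma erase_split {n : ℕ} (f : Fin n → Fin n → ℂ) :
    (∏ j : Fin n, ∏ k ∈ univ.erase j, f j k) =
      (∏ j : Fin n, ∏ k ∈ Iio j, f j k) * ∏ j : Fin n, ∏ k ∈ Ioi j, f j k := by
  rw [← Finset.prod_mul_distrib]
  refine Finset.prod_congr rfl fun j _ => ?_
  rw [← Finset.prod_union (by simp only [Finset.disjoint_left, mem_Iio, mem_Ioi]; exact fun a ha h2 => absurd (lt_trans ha h2) (lt_irrefl _))]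
  apply Finset.prod_congr _ fun _ _ => rfl
  ext k
  simp only [mem_erase, mem_univ, and_true, mem_union, mem_Iio, mem_Ioi]
  exact ne_iff_lt_or_gt

lemma det_nodal {n : ℕ} (a b : Fin n → ℂ) (hb : Function.Injective b) :
    Matrix.det (Matrix.of fun j k => ∏ k' ∈ univ.erase k, (a j - b k')) =
      (∏ i : Fin n, ∏ j ∈ Ioi i, (a j - a i)) * ∏ i : Fin n, ∏ j ∈ Ioi i, (b i - b j) := by
  classical
  set P : Fin n → ℂ[X] := fun k => ∏ k' ∈ univ.erase k, (X - C (b k')) with hP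
  have hdeg : ∀ k, (P k).natDegree < n := by
    intro k
    have h1 : (P k).natDegree = (univ.erase k).card := by
      rw [hP]
      rw [natDegree_prod _ _ (fun i _ => X_sub_C_ne_zero (b i))]
      simp
    rw [h1, card_erase_of_mem (mem_univ k), card_univ, Fintype.card_fin]
    have := k.2
    omega
  set Cm : Matrix (Fin n) (Fin n) ℂ := Matrix.of fun i k => (P k).coeff i with hCm
  have heval : ∀ (k : Fin n) (z : ℂ), (P k).eval z = ∑ i : Fin n, (P k).coeff i * z ^ (i : ℕ) := by
    intro k z
    rw [eval_eq_sum_range' (hdeg k), ← Fin.sum_univ_eq_sum_range]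
  have hevalP : ∀ (k : Fin n) (z : ℂ), (P k).eval z = ∏ k' ∈ univ.erase k, (z - b k') := by
    intro k z; rw [hP]; simp [eval_prod]
  have hN : (Matrix.of fun j k => ∏ k' ∈ univ.erase k, (a j - b k'))
      = Matrix.vandermonde a * Cm := by
    ext j k
    rw [Matrix.mul_apply]
    simp only [Matrix.vandermonde_apply, Matrix.of_apply, hCm]
    rw [← hevalP k (a j), heval k (a j)]
    refine Finset.sum_congr rfl fun i _ => ?_
    ring
  have hDiag : Matrix.vandermonde b * Cm
      = Matrix.diagonal (fun j => ∏ k' ∈ univ.erase j, (b j - b k')) := by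
    ext j k
    rw [Matrix.mul_apply]
    have h2 : ∑ i, Matrix.vandermonde b j i * Cm i k = (P k).eval (b j) := by
      rw [heval k (b j)]
      refine Finset.sum_congr rfl fun i _ => ?_
      simp only [Matrix.vandermonde_apply, Matrix.of_apply, hCm]
      ring
    rw [h2, hevalP]
    by_cases hjk : j = k
    · subst hjk; simp [Matrix.diagonal_apply_eq]
    · rw [Matrix.diagonal_apply_ne _ hjk]
      exact Finset.prod_eq_zero (Finset.mem_erase.mpr ⟨hjk, mem_univ j⟩) (sub_self _)
  have hVbne : Matrix.det (Matrix.vandermonde b) ≠ 0 := by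
    rw [Matrix.det_vandermonde_ne_zero_iff]; exact hb
  have hdetCm : Matrix.det Cm = ∏ i : Fin n, ∏ j ∈ Ioi i, (b i - b j) := by
    have h3 : Matrix.det (Matrix.vandermonde b) * Matrix.det Cm
        = ∏ j, ∏ k' ∈ univ.erase j, (b j - b k') := by
      rw [← Matrix.det_mul, hDiag, Matrix.det_diagonal]
    rw [erase_split, pair_swap, ← Matrix.det_vandermonde b] at h3
    exact mul_left_cancel₀ hVbne h3
  rw [hN, Matrix.det_mul, Matrix.det_vandermonde, hdetCm]

lemma cauchy_det {n : ℕ} (a b : Fin n → ℂ) (hab : ∀ j k, a j ≠ b k) :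
    Matrix.det (Matrix.of fun j k => (a j - b k)⁻¹) =
      (∏ i : Fin n, ∏ j ∈ Ioi i, (a j - a i) * (b i - b j)) /
        ∏ j : Fin n, ∏ k : Fin n, (a j - b k) := by
  classical
  by_cases hb : Function.Injective b
  · have key : (Matrix.of fun j k => (a j - b k)⁻¹) =
        Matrix.of (fun j k => (∏ k' : Fin n, (a j - b k'))⁻¹ *
          (Matrix.of fun j k => ∏ k' ∈ univ.erase k, (a j - b k')) j k) := by
      ext j k
      simp only [Matrix.of_apply]
      have hE : (∏ k' ∈ univ.erase k, (a j - b k')) ≠ 0 :=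
        Finset.prod_ne_zero_iff.mpr fun i _ => sub_ne_zero.mpr (hab j i)
      rw [← Finset.mul_prod_erase univ _ (mem_univ k), mul_inv, mul_assoc,
        inv_mul_cancel₀ hE, mul_one]
    rw [key, Matrix.det_mul_column, det_nodal a b hb]
    rw [Finset.prod_inv_distrib]
    simp only [Finset.prod_mul_distrib]
    rw [div_eq_mul_inv]
    ring
  · obtain ⟨k1, k2, he, hne⟩ : ∃ k1 k2, b k1 = b k2 ∧ k1 ≠ k2 :=
      Function.not_injective_iff.mp hb
    have hdet0 : Matrix.det (Matrix.of fun j k => (a j - b k)⁻¹) = 0 :=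
      Matrix.det_zero_of_column_eq hne (fun j => by simp [he])
    rw [hdet0]
    symm
    refine div_eq_zero_iff.mpr (Or.inl ?_)
    rcases lt_or_gt_of_ne hne with h12 | h21
    · refine Finset.prod_eq_zero (mem_univ k1) ?_
      refine Finset.prod_eq_zero (Finset.mem_Ioi.mpr h12) ?_
      rw [he, sub_self, mul_zero]
    · refine Finset.prod_eq_zero (mem_univ k2) ?_
      refine Finset.prod_eq_zero (Finset.mem_Ioi.mpr h21) ?_
      rw [← he, sub_self, mul_zero]

lemma pair_prod_eq {n : ℕ} (f : Fin n → ℂ) :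
    (∏ i : Fin n, ∏ j ∈ Ioi i, (f i * f j)) = (∏ i : Fin n, f i) ^ (n - 1) := by
  have swap1 : (∏ i : Fin n, ∏ j ∈ Ioi i, f j) = ∏ j : Fin n, ∏ i ∈ Iio j, f j :=
    Finset.prod_comm' (fun u v => by simp [mem_Ioi, mem_Iio])
  calc ∏ i : Fin n, ∏ j ∈ Ioi i, (f i * f j)
      = (∏ i : Fin n, ∏ j ∈ Ioi i, f i) * ∏ i : Fin n, ∏ j ∈ Ioi i, f j := by
        simp only [Finset.prod_mul_distrib]
    _ = (∏ i : Fin n, f i ^ (n - 1 - (i : ℕ))) * ∏ j : Fin n, f j ^ (j : ℕ) := by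
        rw [swap1]; congr 1
        · exact Finset.prod_congr rfl fun i _ => by rw [Finset.prod_const, Fin.card_Ioi]
        · exact Finset.prod_congr rfl fun j _ => by rw [Finset.prod_const, Fin.card_Iio]
    _ = ∏ i : Fin n, f i ^ (n - 1) := by
        rw [← Finset.prod_mul_distrib]
        refine Finset.prod_congr rfl fun i _ => ?_
        rw [← pow_add]
        congr 1
        have := i.2
        omega
    _ = (∏ i : Fin n, f i) ^ (n - 1) := Finset.prod_pow _ _ _

lemma all_prod_eq {n : ℕ} (f g : Fin n → ℂ) :
    (∏ j : Fin n, ∏ k : Fin n, (f j * g k)) = (∏ j : Fin n, f j) ^ n * (∏ k : Fin n, g k) ^ n := by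
  have h1 : ∀ j, (∏ k : Fin n, (f j * g k)) = f j ^ n * ∏ k : Fin n, g k := fun j => by
    rw [Finset.prod_mul_distrib, Finset.prod_const, card_univ, Fintype.card_fin]
  rw [Finset.prod_congr rfl fun j _ => h1 j, Finset.prod_mul_distrib, Finset.prod_pow,
    Finset.prod_const, card_univ, Fintype.card_fin]

lemma scalar_final (m : ℕ) (P Q A1 K T CA : ℂ) (hP : P ≠ 0) (hQ : Q ≠ 0)
    (hT : T ≠ 0) (hCA : CA ≠ 0) :
    (2 ^ (m + 1) * P ^ 2) * (Q ^ 2 * ((A1 * ((2 ^ (m + 1) * (P * Q)) ^ m * K)) /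
        (T * ((2 ^ (m + 1) * P) ^ (m + 1) * Q ^ (m + 1) * CA))))
      = K / (2 ^ (m + 1) * CA) * ((2 ^ (m + 1) * P) * (Q * (A1 / T))) := by
  have h2 : (2 : ℂ) ≠ 0 := two_ne_zero
  have hden1 : T * ((2 ^ (m + 1) * P) ^ (m + 1) * Q ^ (m + 1) * CA) ≠ 0 :=
    mul_ne_zero hT (mul_ne_zero (mul_ne_zero
      (pow_ne_zero _ (mul_ne_zero (pow_ne_zero _ h2) hP)) (pow_ne_zero _ hQ)) hCA)
  rw [← mul_div_assoc, ← mul_div_assoc, div_eq_iff hden1]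
  field_simp [hT, hCA]
  ring
/-- Modified hyperbolic Cauchy determinant identity:
`det [1/sinh(2(x_j - y_k))] = ∏_{j>k} cosh(x_j-x_k) cosh(y_k-y_j) / (2ⁿ ∏_{j,k} cosh(x_j-y_k))
  · det [1/sinh(x_j - y_k)]`. -/
theorem stmt4 (n : ℕ) (hn : 1 ≤ n) (x y : Fin n → ℂ)
    (h : ∀ j k, Complex.sinh (2 * (x j - y k)) ≠ 0) :
    Matrix.det (Matrix.of fun j k => 1 / Complex.sinh (2 * (x j - y k))) =
      (∏ j : Fin n, ∏ k ∈ Finset.univ.filter (fun k => k < j),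
          Complex.cosh (x j - x k) * Complex.cosh (y k - y j)) /
        (2 ^ n * ∏ j : Fin n, ∏ k : Fin n, Complex.cosh (x j - y k)) *
        Matrix.det (Matrix.of fun j k => 1 / Complex.sinh (x j - y k)) := by
  classical
  obtain ⟨p, hp⟩ : ∃ p : Fin n → ℂ, ∀ j, p j = Complex.exp (x j) := ⟨_, fun _ => rfl⟩
  obtain ⟨q, hq⟩ : ∃ q : Fin n → ℂ, ∀ k, q k = Complex.exp (y k) := ⟨_, fun _ => rfl⟩
  have hs : ∀ j k, Complex.sinh (x j - y k) ≠ 0 := by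
    intro j k h0; apply h j k; rw [Complex.sinh_two_mul, h0]; ring
  have hc : ∀ j k, Complex.cosh (x j - y k) ≠ 0 := by
    intro j k h0; apply h j k; rw [Complex.sinh_two_mul, h0]; ring
  have hpne : ∀ j, p j ≠ 0 := fun j => by rw [hp j]; exact Complex.exp_ne_zero _
  have hqne : ∀ k, q k ≠ 0 := fun k => by rw [hq k]; exact Complex.exp_ne_zero _
  obtain ⟨a, ha⟩ : ∃ a : Fin n → ℂ, ∀ j, a j = p j ^ 2 := ⟨_, fun _ => rfl⟩
  obtain ⟨b, hb⟩ : ∃ b : Fin n → ℂ, ∀ k, b k = q k ^ 2 := ⟨_, fun _ => rfl⟩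
  have hane0 : ∀ j, a j ≠ 0 := fun j => by rw [ha j]; exact pow_ne_zero _ (hpne j)
  have hbne0 : ∀ k, b k ≠ 0 := fun k => by rw [hb k]; exact pow_ne_zero _ (hqne k)
  have hdiff : ∀ j k, a j - b k = 2 * p j * q k * Complex.sinh (x j - y k) :=
    fun j k => by rw [ha j, hb k, hp j, hq k]; exact key_sinh _ _
  have hsum : ∀ j k, a j + b k = 2 * p j * q k * Complex.cosh (x j - y k) :=
    fun j k => by rw [ha j, hb k, hp j, hq k]; exact key_cosh _ _
  have hsumaa : ∀ j k, a j + a k = 2 * p j * p k * Complex.cosh (x j - x k) :=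
    fun j k => by rw [ha j, ha k, hp j, hp k]; exact key_cosh _ _
  have hsumbb : ∀ j k, b j + b k = 2 * q j * q k * Complex.cosh (y j - y k) :=
    fun j k => by rw [hb j, hb k, hq j, hq k]; exact key_cosh _ _
  have hdiff2 : ∀ j k, a j ^ 2 - b k ^ 2 = 2 * a j * b k * Complex.sinh (2 * (x j - y k)) := by
    intro j k
    have hpj : Complex.exp (2 * x j) = a j := by
      rw [ha j, hp j, two_mul, Complex.exp_add, sq]
    have hqk : Complex.exp (2 * y k) = b k := by
      rw [hb k, hq k, two_mul, Complex.exp_add, sq]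
    have hkey := key_sinh (2 * x j) (2 * y k)
    rw [hpj, hqk] at hkey
    rw [hkey]
    have harg : 2 * x j - 2 * y k = 2 * (x j - y k) := by ring
    rw [harg]
  have hane : ∀ j k, a j - b k ≠ 0 := fun j k => by
    rw [hdiff]
    exact mul_ne_zero (mul_ne_zero (mul_ne_zero two_ne_zero (hpne j)) (hqne k)) (hs j k)
  have ha2ne : ∀ j k, a j ^ 2 - b k ^ 2 ≠ 0 := fun j k => by
    rw [hdiff2]
    exact mul_ne_zero (mul_ne_zero (mul_ne_zero two_ne_zero (hane0 j)) (hbne0 k)) (h j k)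
  have gen : ∀ (c d s : ℂ), c ≠ 0 → d ≠ 0 → 1 / s = (2 * c) * (d * (2 * c * d * s)⁻¹) := by
    intro c d s hc hd
    rw [mul_inv]
    have h1 : (2 * c) * (d * ((2 * c * d)⁻¹ * s⁻¹)) = ((2 * c * d) * (2 * c * d)⁻¹) * s⁻¹ := by
      ring
    rw [h1, mul_inv_cancel₀ (mul_ne_zero (mul_ne_zero two_ne_zero hc) hd), one_mul, one_div]
  -- LHS determinant
  have e1 : ∀ j k : Fin n, 1 / Complex.sinh (2 * (x j - y k))
      = (2 * a j) * (b k * (a j ^ 2 - b k ^ 2)⁻¹) := by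
    intro j k
    rw [hdiff2 j k]
    exact gen (a j) (b k) _ (hane0 j) (hbne0 k)
  have d1 : Matrix.det (Matrix.of fun j k => 1 / Complex.sinh (2 * (x j - y k)))
      = (∏ j, (2 * a j)) * ((∏ k, b k) *
        ((∏ i : Fin n, ∏ j ∈ Ioi i, ((a j ^ 2 - a i ^ 2) * (b i ^ 2 - b j ^ 2))) /
          ∏ j : Fin n, ∏ k : Fin n, (a j ^ 2 - b k ^ 2))) := by
    have step1 : (Matrix.of fun j k => 1 / Complex.sinh (2 * (x j - y k)))
        = Matrix.of (fun j k => (2 * a j) *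
            (Matrix.of (fun j k => b k * (Matrix.of (fun j k => (a j ^ 2 - b k ^ 2)⁻¹)) j k) j k)) := by
      ext j k; simp only [Matrix.of_apply]; exact e1 j k
    rw [step1, Matrix.det_mul_column, Matrix.det_mul_row,
      cauchy_det (fun j => a j ^ 2) (fun k => b k ^ 2)
        (fun j k => sub_ne_zero.mp (ha2ne j k))]
  -- RHS determinant
  have e2 : ∀ j k : Fin n, 1 / Complex.sinh (x j - y k)
      = (2 * p j) * (q k * (a j - b k)⁻¹) := by
    intro j k
    rw [hdiff j k]
    exact gen (p j) (q k) _ (hpne j) (hqne k)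
  have d2 : Matrix.det (Matrix.of fun j k => 1 / Complex.sinh (x j - y k))
      = (∏ j, (2 * p j)) * ((∏ k, q k) *
        ((∏ i : Fin n, ∏ j ∈ Ioi i, ((a j - a i) * (b i - b j))) /
          ∏ j : Fin n, ∏ k : Fin n, (a j - b k))) := by
    have step1 : (Matrix.of fun j k => 1 / Complex.sinh (x j - y k))
        = Matrix.of (fun j k => (2 * p j) *
            (Matrix.of (fun j k => q k * (Matrix.of (fun j k => (a j - b k)⁻¹)) j k) j k)) := by
      ext j k; simp only [Matrix.of_apply]; exact e2 j k
    rw [step1, Matrix.det_mul_column, Matrix.det_mul_row,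
      cauchy_det a b (fun j k => sub_ne_zero.mp (hane j k))]
  -- convert statement's cosh pair product
  have hf : ∀ j : Fin n, Finset.univ.filter (fun k => k < j) = Iio j := fun j => by
    ext k; simp
  have hK : (∏ j : Fin n, ∏ k ∈ Finset.univ.filter (fun k => k < j),
        Complex.cosh (x j - x k) * Complex.cosh (y k - y j))
      = ∏ i : Fin n, ∏ j ∈ Ioi i, Complex.cosh (x j - x i) * Complex.cosh (y i - y j) := by
    rw [Finset.prod_congr rfl fun j (_ : j ∈ univ) => by rw [hf j]]
    exact pair_swap (fun j k => Complex.cosh (x j - x k) * Complex.cosh (y k - y j))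
  have numsplit : (∏ i : Fin n, ∏ j ∈ Ioi i, ((a j ^ 2 - a i ^ 2) * (b i ^ 2 - b j ^ 2)))
      = (∏ i : Fin n, ∏ j ∈ Ioi i, (a j - a i) * (b i - b j)) *
        ((∏ i : Fin n, ∏ j ∈ Ioi i, ((2 * p i * q i) * (2 * p j * q j))) *
          (∏ i : Fin n, ∏ j ∈ Ioi i, Complex.cosh (x j - x i) * Complex.cosh (y i - y j))) := by
    have hfac : ∀ i j : Fin n, (a j ^ 2 - a i ^ 2) * (b i ^ 2 - b j ^ 2)
        = ((a j - a i) * (b i - b j)) * (((2 * p i * q i) * (2 * p j * q j)) *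
            (Complex.cosh (x j - x i) * Complex.cosh (y i - y j))) := by
      intro i j
      have h1 : (a j ^ 2 - a i ^ 2) * (b i ^ 2 - b j ^ 2)
          = ((a j - a i) * (b i - b j)) * ((a j + a i) * (b i + b j)) := by ring
      rw [h1, hsumaa j i, hsumbb i j]
      ring
    rw [Finset.prod_congr rfl fun i (_ : i ∈ univ) =>
      Finset.prod_congr rfl fun j (_ : j ∈ Ioi i) => hfac i j]
    simp only [Finset.prod_mul_distrib]
  have densplit : (∏ j : Fin n, ∏ k : Fin n, (a j ^ 2 - b k ^ 2))
      = (∏ j : Fin n, ∏ k : Fin n, (a j - b k)) *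
        ((∏ j : Fin n, ∏ k : Fin n, (2 * p j * q k)) *
          ∏ j : Fin n, ∏ k : Fin n, Complex.cosh (x j - y k)) := by
    have hfac : ∀ j k : Fin n, a j ^ 2 - b k ^ 2
        = (a j - b k) * ((2 * p j * q k) * Complex.cosh (x j - y k)) := by
      intro j k
      have h1 : a j ^ 2 - b k ^ 2 = (a j - b k) * (a j + b k) := by ring
      rw [h1, hsum j k]
    rw [Finset.prod_congr rfl fun j (_ : j ∈ univ) =>
      Finset.prod_congr rfl fun k (_ : k ∈ univ) => hfac j k]
    simp only [Finset.prod_mul_distrib]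
  have hPQpair : (∏ i : Fin n, ∏ j ∈ Ioi i, ((2 * p i * q i) * (2 * p j * q j)))
      = (∏ t : Fin n, (2 * p t * q t)) ^ (n - 1) := pair_prod_eq (fun t => 2 * p t * q t)
  have hPQall : (∏ j : Fin n, ∏ k : Fin n, (2 * p j * q k))
      = (∏ j : Fin n, (2 * p j)) ^ n * (∏ k : Fin n, q k) ^ n := all_prod_eq _ _
  have e2a : (∏ j : Fin n, (2 * a j)) = 2 ^ n * (∏ j : Fin n, p j) ^ 2 := by
    rw [Finset.prod_mul_distrib, Finset.prod_const, card_univ, Fintype.card_fin]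
    congr 1
    rw [Finset.prod_congr rfl fun j _ => ha j, Finset.prod_pow]
  have eb : (∏ k : Fin n, b k) = (∏ k : Fin n, q k) ^ 2 := by
    rw [Finset.prod_congr rfl fun k _ => hb k, Finset.prod_pow]
  have e2p : (∏ j : Fin n, (2 * p j)) = 2 ^ n * ∏ j : Fin n, p j := by
    rw [Finset.prod_mul_distrib, Finset.prod_const, card_univ, Fintype.card_fin]
  have e2pq : (∏ t : Fin n, (2 * p t * q t)) = 2 ^ n * ((∏ j : Fin n, p j) * ∏ k : Fin n, q k) := by
    rw [Finset.prod_mul_distrib, Finset.prod_mul_distrib, Finset.prod_const, card_univ,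
      Fintype.card_fin, mul_assoc]
  have hTne : (∏ j : Fin n, ∏ k : Fin n, (a j - b k)) ≠ 0 :=
    Finset.prod_ne_zero_iff.mpr fun j _ => Finset.prod_ne_zero_iff.mpr fun k _ => hane j k
  have hCAne : (∏ j : Fin n, ∏ k : Fin n, Complex.cosh (x j - y k)) ≠ 0 :=
    Finset.prod_ne_zero_iff.mpr fun j _ => Finset.prod_ne_zero_iff.mpr fun k _ => hc j k
  have hPne : (∏ j : Fin n, p j) ≠ 0 := Finset.prod_ne_zero_iff.mpr fun j _ => hpne j
  have hQne : (∏ k : Fin n, q k) ≠ 0 := Finset.prod_ne_zero_iff.mpr fun k _ => hqne k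
  rw [d1, d2, hK, numsplit, densplit, hPQpair, hPQall, e2a, eb, e2p, e2pq]
  obtain ⟨m, rfl⟩ : ∃ m, n = m + 1 := ⟨n - 1, by omega⟩
  simp only [Nat.add_sub_cancel]
  obtain ⟨P, hPP⟩ : ∃ c, (∏ j : Fin (m + 1), p j) = c := ⟨_, rfl⟩
  obtain ⟨Q, hQQ⟩ : ∃ c, (∏ k : Fin (m + 1), q k) = c := ⟨_, rfl⟩
  obtain ⟨A1, hA1⟩ : ∃ c,
      (∏ i : Fin (m + 1), ∏ j ∈ Ioi i, (a j - a i) * (b i - b j)) = c := ⟨_, rfl⟩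
  obtain ⟨K, hKK⟩ : ∃ c,
      (∏ i : Fin (m + 1), ∏ j ∈ Ioi i,
        Complex.cosh (x j - x i) * Complex.cosh (y i - y j)) = c := ⟨_, rfl⟩
  obtain ⟨T, hTT⟩ : ∃ c, (∏ j : Fin (m + 1), ∏ k : Fin (m + 1), (a j - b k)) = c := ⟨_, rfl⟩
  obtain ⟨CA, hCC⟩ : ∃ c,
      (∏ j : Fin (m + 1), ∏ k : Fin (m + 1), Complex.cosh (x j - y k)) = c := ⟨_, rfl⟩
  rw [hPP] at hPne
  rw [hQQ] at hQne
  rw [hTT] at hTne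
  rw [hCC] at hCAne
  rw [hPP, hQQ, hA1, hKK, hTT, hCC]
  exact scalar_final m P Q A1 K T CA hPne hQne hTne hCAne
end

section
/- Let m ≥ 1 be an integer, p₀ ∈ (0, π/2), and let Λ > 0 be defined by cosh(2Λ) = 1/cos(p₀). Then 2^{m²} ∫_{[−Λ,Λ]^m} ( ∏_{m ≥ a > b ≥ 1} sinh²(λ_a − λ_b) ) / ( ∏_{a=1}^m cosh^m(2λ_a) ) dλ₁…dλ_m = 2^{m² − m} ∫_{[−p₀,p₀]^m} ∏_{m ≥ a > b ≥ 1} sin²( (p_a − p_b)/2 ) dp₁…dp_m. -/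
/-!
Substitute `λ = rapidity p`, where `sinh 2λ = tan p` and `cosh 2λ = 1 / cos p`: it maps
`[-p₀, p₀]` onto `[-Λ, Λ]` with `dλ = dp / (2 cos p)`. The subtraction formula for `cosh` gives
`sinh² (λ_a - λ_b) = sin² ((p_a - p_b) / 2) / (cos p_a cos p_b)`. Each `p_a` occurs in `m - 1`
pairs, so the cosines from the numerator, from `cosh^m 2λ_a = cos^(-m) p_a` and from the Jacobian
cancel, leaving the factor `2^(-m)`.
-/

open Real MeasureTheory Finset

section PiMap

variable {ι : Type*} [Fintype ι] {f f' : ℝ → ℝ}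

theorem hasFDerivAt_piMap_of_hasDerivAt {x : ι → ℝ} (hf : ∀ i, HasDerivAt f (f' (x i)) (x i)) :
    HasFDerivAt (Pi.map fun _ => f)
      (ContinuousLinearMap.piMap fun i => ContinuousLinearMap.toSpanSingleton ℝ (f' (x i))) x :=
  hasFDerivAt_pi.2 fun i => (hf i).hasFDerivAt.comp x (hasFDerivAt_apply i x)

theorem det_piMap_toSpanSingleton (d : ι → ℝ) :
    (ContinuousLinearMap.piMap fun i => ContinuousLinearMap.toSpanSingleton ℝ (d i)).det =
      ∏ i, d i := by
  simp [ContinuousLinearMap.piMap, ContinuousLinearMap.det_pi]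

theorem integral_image_univ_pi_eq {s : Set ℝ} (hs : MeasurableSet s)
    (hf : ∀ x ∈ s, HasDerivAt f (f' x) x) (hinj : Set.InjOn f s) (F : (ι → ℝ) → ℝ) :
    ∫ y in Set.univ.pi fun _ => f '' s, F y =
      ∫ x in Set.univ.pi fun _ => s, (∏ i, |f' (x i)|) * F (fun i => f (x i)) := by
  rw [← Set.piMap_image_univ_pi]
  have hderiv : ∀ x ∈ Set.univ.pi fun _ : ι => s, HasFDerivWithinAt (Pi.map fun _ => f)
      (ContinuousLinearMap.piMap fun i => ContinuousLinearMap.toSpanSingleton ℝ (f' (x i)))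
      (Set.univ.pi fun _ => s) x := fun x hx =>
    (hasFDerivAt_piMap_of_hasDerivAt fun i => hf _ (hx i trivial)).hasFDerivWithinAt
  have hinj_pi : Set.InjOn (Pi.map fun _ : ι => f) (Set.univ.pi fun _ => s) :=
    fun x hx y hy hxy => funext fun i => hinj (hx i trivial) (hy i trivial) (congrFun hxy i)
  rw [integral_image_eq_integral_abs_det_fderiv_smul volume
    (MeasurableSet.univ_pi fun _ => hs) hderiv hinj_pi F]
  simp only [det_piMap_toSpanSingleton, Finset.abs_prod, smul_eq_mul]
  rfl

end PiMap

theorem Finset.card_filter_lt_add_card_filter_gt {ι : Type*} [Fintype ι] [LinearOrder ι] (a : ι) :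
    #{b | b < a} + #{b | a < b} = Fintype.card ι - 1 := by
  rw [← card_union_of_disjoint (disjoint_filter.2 fun b _ h h' => lt_asymm h h'),
    ← card_univ, ← card_erase_of_mem (mem_univ a)]
  congr 1
  ext b
  simp [lt_or_lt_iff_ne, or_comm, eq_comm]

theorem Finset.prod_prod_filter_lt_mul {ι M : Type*} [Fintype ι] [LinearOrder ι] [CommMonoid M]
    (c : ι → M) :
    ∏ a, ∏ b with b < a, c a * c b = ∏ a, c a ^ (Fintype.card ι - 1) := by
  have hswap : ∏ a, ∏ b with b < a, c b = ∏ b, ∏ a with b < a, c b :=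
    prod_comm' fun _ _ => by simp
  simp only [prod_mul_distrib, prod_const, hswap]
  simp only [← prod_mul_distrib, ← pow_add, card_filter_lt_add_card_filter_gt]

/-- The substitution `cosh 2λ = 1 / cos p` on `|p| < π / 2`, with the branch `sinh 2λ = tan p`
(half the inverse Gudermannian function). -/
noncomputable def rapidity (p : ℝ) : ℝ := arsinh (tan p) / 2

theorem sinh_two_mul_rapidity (p : ℝ) : sinh (2 * rapidity p) = tan p := by
  rw [rapidity, mul_div_cancel₀ _ two_ne_zero, sinh_arsinh]

theorem cosh_two_mul_rapidity {p : ℝ} (hp : 0 < cos p) : cosh (2 * rapidity p) = (cos p)⁻¹ := by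
  rw [rapidity, mul_div_cancel₀ _ two_ne_zero, cosh_arsinh, ← inv_sqrt_one_add_tan_sq hp, inv_inv]

theorem rapidity_neg (p : ℝ) : rapidity (-p) = -rapidity p := by
  rw [rapidity, rapidity, tan_neg, arsinh_neg, neg_div]

theorem hasDerivAt_rapidity {p : ℝ} (hp : 0 < cos p) :
    HasDerivAt rapidity (2 * cos p)⁻¹ p := by
  have h := ((hasDerivAt_arsinh (tan p)).comp p (hasDerivAt_tan hp.ne')).div_const 2
  refine h.congr_deriv ?_
  rw [inv_sqrt_one_add_tan_sq hp]
  field_simp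

theorem strictMonoOn_rapidity : StrictMonoOn rapidity (Set.Ioo (-(π / 2)) (π / 2)) :=
  fun _ hx _ hy hxy => div_lt_div_of_pos_right (arsinh_lt_arsinh.2 (strictMonoOn_tan hx hy hxy))
    two_pos

theorem image_rapidity_Icc {a b : ℝ} (ha : -(π / 2) < a) (hab : a ≤ b) (hb : b < π / 2) :
    rapidity '' Set.Icc a b = Set.Icc (rapidity a) (rapidity b) := by
  have hsub : Set.Icc a b ⊆ Set.Ioo (-(π / 2)) (π / 2) := Set.Icc_subset_Ioo ha hb
  refine ContinuousOn.image_Icc_of_monotoneOn hab (fun p hp => ?_)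
    (strictMonoOn_rapidity.monotoneOn.mono hsub)
  exact (hasDerivAt_rapidity (cos_pos_of_mem_Ioo (hsub hp))).continuousAt.continuousWithinAt

theorem rapidity_eq_of_cosh_eq {p Λ : ℝ} (hp : p ∈ Set.Ico 0 (π / 2)) (hΛ : 0 ≤ Λ)
    (hcosh : cosh (2 * Λ) = 1 / cos p) : rapidity p = Λ := by
  have hcos : 0 < cos p := cos_pos_of_mem_Ioo ⟨by linarith [hp.1, pi_pos], hp.2⟩
  have hnonneg : 0 ≤ 2 * rapidity p := by
    rw [rapidity, mul_div_cancel₀ _ two_ne_zero, arsinh_nonneg_iff]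
    exact tan_nonneg_of_nonneg_of_le_pi_div_two hp.1 hp.2.le
  have h2Λ : (0 : ℝ) ≤ 2 * Λ := by linarith
  have := cosh_injOn hnonneg h2Λ (by rw [cosh_two_mul_rapidity hcos, hcosh, one_div])
  linarith

theorem sinh_rapidity_sub_sq {a b : ℝ} (ha : 0 < cos a) (hb : 0 < cos b) :
    sinh (rapidity a - rapidity b) ^ 2 = sin ((a - b) / 2) ^ 2 / (cos a * cos b) := by
  -- `2 sinh² u = cosh 2u - 1`, expanded by the subtraction formula for `cosh`
  have hcosh : 2 * sinh (rapidity a - rapidity b) ^ 2 + 1 =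
      (cos a)⁻¹ * (cos b)⁻¹ - tan a * tan b := by
    rw [← cosh_two_mul_rapidity ha, ← cosh_two_mul_rapidity hb, ← sinh_two_mul_rapidity,
      ← sinh_two_mul_rapidity, ← cosh_sub, ← mul_sub, cosh_two_mul, cosh_sq]
    ring
  have hsin : sin ((a - b) / 2) ^ 2 = 1 / 2 - cos (a - b) / 2 := by
    rw [sin_sq_eq_half_sub, mul_div_cancel₀ _ two_ne_zero]
  rw [hsin, cos_sub, eq_div_iff (mul_pos ha hb).ne']
  rw [tan_eq_sin_div_cos, tan_eq_sin_div_cos] at hcosh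
  field_simp at hcosh
  linear_combination hcosh / 2

theorem prod_sinh_rapidity_sub_sq {m : ℕ} {p : Fin m → ℝ} (hp : ∀ i, 0 < cos (p i)) :
    ∏ a, ∏ b with b < a, sinh (rapidity (p a) - rapidity (p b)) ^ 2 =
      (∏ a, ∏ b with b < a, sin ((p a - p b) / 2) ^ 2) / ∏ a, cos (p a) ^ (m - 1) := by
  have hpairs := prod_prod_filter_lt_mul fun a => cos (p a)
  rw [Fintype.card_fin] at hpairs
  rw [← hpairs, ← prod_div_distrib]
  refine prod_congr rfl fun a _ => ?_
  rw [← prod_div_distrib]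
  exact prod_congr rfl fun b _ => sinh_rapidity_sub_sq (hp a) (hp b)

theorem prod_abs_deriv_rapidity_mul_integrand {m : ℕ} {p : Fin m → ℝ} (hp : ∀ i, 0 < cos (p i)) :
    (∏ i, |(2 * cos (p i))⁻¹|) *
        ((∏ a, ∏ b with b < a, sinh (rapidity (p a) - rapidity (p b)) ^ 2) /
          ∏ a, cosh (2 * rapidity (p a)) ^ m) =
      ((2 : ℝ) ^ m)⁻¹ * ∏ a, ∏ b with b < a, sin ((p a - p b) / 2) ^ 2 := by
  have hcos_pow : ∏ a, cos (p a) ^ (m - 1) * cos (p a) = ∏ a, cos (p a) ^ m :=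
    prod_congr rfl fun a _ => pow_sub_one_mul (Fin.pos a).ne' _
  have hpos : 0 < ∏ a, cos (p a) := prod_pos fun a _ => hp a
  rw [prod_sinh_rapidity_sub_sq hp]
  simp only [cosh_two_mul_rapidity (hp _), abs_inv, abs_mul,
    abs_two, abs_of_pos (hp _), prod_inv_distrib, prod_mul_distrib, prod_pow, prod_const,
    card_univ, Fintype.card_fin, inv_pow] at hcos_pow ⊢
  rw [← hcos_pow]
  field_simp

theorem stmt5_general (m : ℕ) (p₀ : ℝ) (hp₀ : p₀ ∈ Set.Ioo 0 (π / 2))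
    (Λ : ℝ) (hΛ : 0 < Λ) (hcosh : Real.cosh (2 * Λ) = 1 / Real.cos p₀) :
    (2 : ℝ) ^ (m ^ 2) *
      ∫ x : Fin m → ℝ in Set.univ.pi (fun _ => Set.Icc (-Λ) Λ),
        (∏ a : Fin m, ∏ b ∈ Finset.univ.filter (fun b => b < a),
            Real.sinh (x a - x b) ^ 2) /
          ∏ a : Fin m, Real.cosh (2 * x a) ^ m =
    (2 : ℝ) ^ (m ^ 2 - m) *
      ∫ p : Fin m → ℝ in Set.univ.pi (fun _ => Set.Icc (-p₀) p₀),
        ∏ a : Fin m, ∏ b ∈ Finset.univ.filter (fun b => b < a),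
          Real.sin ((p a - p b) / 2) ^ 2 := by
  obtain ⟨hp₀_pos, hp₀_lt⟩ := hp₀
  have hsub : Set.Icc (-p₀) p₀ ⊆ Set.Ioo (-(π / 2)) (π / 2) :=
    Set.Icc_subset_Ioo (by linarith) hp₀_lt
  have hcos : ∀ p ∈ Set.Icc (-p₀) p₀, 0 < cos p := fun p hp => cos_pos_of_mem_Ioo (hsub hp)
  have himage : rapidity '' Set.Icc (-p₀) p₀ = Set.Icc (-Λ) Λ := by
    rw [image_rapidity_Icc (by linarith) (by linarith) hp₀_lt, rapidity_neg,
      rapidity_eq_of_cosh_eq ⟨hp₀_pos.le, hp₀_lt⟩ hΛ.le hcosh]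
  rw [← himage, integral_image_univ_pi_eq measurableSet_Icc
      (fun p hp => hasDerivAt_rapidity (hcos p hp)) (strictMonoOn_rapidity.injOn.mono hsub),
    setIntegral_congr_fun (MeasurableSet.univ_pi fun _ => measurableSet_Icc)
      fun p hp => prod_abs_deriv_rapidity_mul_integrand fun i => hcos _ (hp i trivial),
    integral_const_mul, pow_sub₀ _ two_ne_zero (Nat.le_self_pow two_ne_zero m), mul_assoc]

/-- Change of variables `cosh 2λ = 1/cos p` in the multiple-integral representation of the
emptiness formation probability of the XX chain. -/
theorem stmt5 (m : ℕ) (hm : 1 ≤ m) (p₀ : ℝ) (hp₀ : p₀ ∈ Set.Ioo 0 (π / 2))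
    (Λ : ℝ) (hΛ : 0 < Λ) (hcosh : Real.cosh (2 * Λ) = 1 / Real.cos p₀) :
    (2 : ℝ) ^ (m ^ 2) *
      ∫ x : Fin m → ℝ in Set.univ.pi (fun _ => Set.Icc (-Λ) Λ),
        (∏ a : Fin m, ∏ b ∈ Finset.univ.filter (fun b => b < a),
            Real.sinh (x a - x b) ^ 2) /
          ∏ a : Fin m, Real.cosh (2 * x a) ^ m =
    (2 : ℝ) ^ (m ^ 2 - m) *
      ∫ p : Fin m → ℝ in Set.univ.pi (fun _ => Set.Icc (-p₀) p₀),
        ∏ a : Fin m, ∏ b ∈ Finset.univ.filter (fun b => b < a),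
          Real.sin ((p a - p b) / 2) ^ 2 :=
  stmt5_general m p₀ hp₀ Λ hΛ hcosh
end

section
/- For every Λ > 0, the (improper, convergent) integral ∫_{−Λ}^{Λ} (1/π) · ( cosh λ / cosh 2λ ) · √( cosh(2Λ) / ( sinh(Λ − λ) · sinh(Λ + λ) ) ) dλ equals 1. -/
/-!
Substitute `sinh λ = sinh Λ · t / √(1 + t²)` with `t ∈ ℝ`. Since
`sinh (Λ - λ) sinh (Λ + λ) = sinh² Λ - sinh² λ` and `cosh 2λ = 1 + 2 sinh² λ`, the density pulls
back to the Cauchy-type density `(√c / π) / (1 + c t²)` with `c = cosh 2Λ`, whose integral over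
`ℝ` is `1`. The change of variables formula for an injective map onto `(-Λ, Λ)` takes care of the
integrable singularities at `±Λ`.
-/

open Real MeasureTheory Set

theorem Real.sinh_sub_mul_sinh_add (a b : ℝ) :
    sinh (a - b) * sinh (a + b) = sinh a ^ 2 - sinh b ^ 2 := by
  rw [sinh_sub, sinh_add]
  linear_combination sinh a ^ 2 * cosh_sq b - sinh b ^ 2 * cosh_sq a

theorem Real.cosh_two_mul_eq_one_add (x : ℝ) : cosh (2 * x) = 1 + 2 * sinh x ^ 2 := by
  rw [cosh_two_mul, cosh_sq]; ring

theorem integral_inv_one_add_mul_sq {c : ℝ} (hc : 0 < c) :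
    ∫ t : ℝ, (1 + c * t ^ 2)⁻¹ = π / √c := by
  have hsc : 0 < √c := sqrt_pos.2 hc
  have hscale : (fun t : ℝ => (1 + c * t ^ 2)⁻¹) = fun t => (1 + (√c * t) ^ 2)⁻¹ := by
    simp only [mul_pow, sq_sqrt hc.le]
  rw [hscale, Measure.integral_comp_mul_left (fun y : ℝ => (1 + y ^ 2)⁻¹),
    integral_univ_inv_one_add_sq, smul_eq_mul, abs_of_pos (inv_pos.2 hsc)]
  field_simp

theorem hasDerivAt_mul_div_sqrt_one_add_sq (s t : ℝ) :
    HasDerivAt (fun t : ℝ => s * t / √(1 + t ^ 2)) (s / √(1 + t ^ 2) ^ 3) t := by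
  have h1 : (0 : ℝ) < 1 + t ^ 2 := by positivity
  have hT : 0 < √(1 + t ^ 2) := sqrt_pos.2 h1
  have hsqrt : HasDerivAt (fun t : ℝ => √(1 + t ^ 2)) (t / √(1 + t ^ 2)) t := by
    convert ((hasDerivAt_pow 2 t).const_add 1).sqrt h1.ne' using 1
    field_simp
    ring
  refine (((hasDerivAt_id' t).const_mul s).fun_div hsqrt hT.ne').congr_deriv ?_
  field_simp
  linear_combination s * sq_sqrt h1.le

theorem strictMono_mul_div_sqrt_one_add_sq {s : ℝ} (hs : 0 < s) :
    StrictMono fun t : ℝ => s * t / √(1 + t ^ 2) :=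
  strictMono_of_deriv_pos fun t => by
    rw [(hasDerivAt_mul_div_sqrt_one_add_sq s t).deriv]
    have : 0 < √(1 + t ^ 2) := sqrt_pos.2 (by positivity)
    positivity

theorem range_mul_div_sqrt_one_add_sq {s : ℝ} (hs : 0 < s) :
    range (fun t : ℝ => s * t / √(1 + t ^ 2)) = Ioo (-s) s := by
  ext v
  constructor
  · rintro ⟨t, rfl⟩
    have hT : 0 < √(1 + t ^ 2) := sqrt_pos.2 (by positivity)
    have habs : |t| < √(1 + t ^ 2) := by
      rw [← sqrt_sq_eq_abs]; exact sqrt_lt_sqrt (sq_nonneg t) (by linarith)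
    rw [mem_Ioo, ← abs_lt, abs_div, abs_of_pos hT, abs_mul, abs_of_pos hs, div_lt_iff₀ hT]
    gcongr
  · rintro ⟨hv₁, hv₂⟩
    -- the inverse map is `v ↦ v / √(s² - v²)`
    have hD : 0 < s ^ 2 - v ^ 2 := by nlinarith
    set D := √(s ^ 2 - v ^ 2)
    have hDpos : 0 < D := sqrt_pos.2 hD
    have hT : √(1 + (v / D) ^ 2) = s / D := by
      rw [← sqrt_sq (div_pos hs hDpos).le]
      congr 1
      field_simp
      linear_combination sq_sqrt hD.le
    refine ⟨v / D, ?_⟩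
    simp only [hT]
    field_simp

noncomputable def saddleDensity (Λ x : ℝ) : ℝ :=
  (1 / π) * (cosh x / cosh (2 * x)) * √(cosh (2 * Λ) / (sinh (Λ - x) * sinh (Λ + x)))

noncomputable def saddleSubst (Λ t : ℝ) : ℝ := arsinh (sinh Λ * t / √(1 + t ^ 2))

theorem hasDerivAt_saddleSubst (Λ t : ℝ) :
    HasDerivAt (saddleSubst Λ) ((√(1 + (sinh Λ * t / √(1 + t ^ 2)) ^ 2))⁻¹ *
      (sinh Λ / √(1 + t ^ 2) ^ 3)) t :=
  (hasDerivAt_arsinh _).comp t (hasDerivAt_mul_div_sqrt_one_add_sq (sinh Λ) t)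

theorem injective_saddleSubst {Λ : ℝ} (hΛ : 0 < Λ) : Function.Injective (saddleSubst Λ) :=
  arsinh_injective.comp (strictMono_mul_div_sqrt_one_add_sq (sinh_pos_iff.2 hΛ)).injective

theorem range_saddleSubst {Λ : ℝ} (hΛ : 0 < Λ) : range (saddleSubst Λ) = Ioo (-Λ) Λ := by
  have harsinh : arsinh '' Ioo (sinh (-Λ)) (sinh Λ) = Ioo (-Λ) Λ := by
    have h : arsinh '' Ioo (sinh (-Λ)) (sinh Λ) = Ioo (arsinh (sinh (-Λ))) (arsinh (sinh Λ)) :=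
      sinhOrderIso.symm.image_Ioo _ _
    rwa [arsinh_sinh, arsinh_sinh] at h
  rw [← harsinh, sinh_neg, ← range_mul_div_sqrt_one_add_sq (sinh_pos_iff.2 hΛ), ← range_comp]
  rfl

theorem saddleDensity_arsinh (Λ v : ℝ) :
    saddleDensity Λ (arsinh v) =
      (1 / π) * (√(1 + v ^ 2) / (1 + 2 * v ^ 2)) * √(cosh (2 * Λ) / (sinh Λ ^ 2 - v ^ 2)) := by
  rw [saddleDensity, sinh_sub_mul_sinh_add, cosh_two_mul_eq_one_add (arsinh v), cosh_arsinh,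
    sinh_arsinh]

theorem abs_deriv_saddleSubst_mul_saddleDensity {Λ : ℝ} (hΛ : 0 < Λ) (t : ℝ) :
    |deriv (saddleSubst Λ) t| * saddleDensity Λ (saddleSubst Λ t) =
      √(cosh (2 * Λ)) / π * (1 + cosh (2 * Λ) * t ^ 2)⁻¹ := by
  have hs : 0 < sinh Λ := sinh_pos_iff.2 hΛ
  have hc : cosh (2 * Λ) = 1 + 2 * sinh Λ ^ 2 := cosh_two_mul_eq_one_add Λ
  have hT2 : √(1 + t ^ 2) ^ 2 = 1 + t ^ 2 := sq_sqrt (by positivity)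
  have hT : 0 < √(1 + t ^ 2) := sqrt_pos.2 (by positivity)
  have hc_pos : 0 < cosh (2 * Λ) := cosh_pos _
  rw [(hasDerivAt_saddleSubst Λ t).deriv, saddleSubst, saddleDensity_arsinh]
  set s := sinh Λ
  set c := cosh (2 * Λ)
  set T := √(1 + t ^ 2)
  rw [abs_of_pos (by positivity)]
  have hgap : s ^ 2 - (s * t / T) ^ 2 = (s / T) ^ 2 := by
    field_simp
    linear_combination hT2
  have hroot : √(c / (s ^ 2 - (s * t / T) ^ 2)) = √c * T / s := by
    rw [hgap, sqrt_eq_iff_mul_self_eq_of_pos (by positivity), mul_div_assoc, mul_mul_mul_comm,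
      mul_self_sqrt hc_pos.le]
    field_simp
  have hdenom : 1 + 2 * (s * t / T) ^ 2 = (1 + c * t ^ 2) / T ^ 2 := by
    field_simp
    linear_combination hT2 - t ^ 2 * hc
  rw [hroot, hdenom]
  field_simp

/-- Normalization of the saddle-point density
`ρ₀(λ) = (1/π)(cosh λ/cosh 2λ)√(cosh 2Λ/(sinh(Λ-λ) sinh(Λ+λ)))` : `∫_{-Λ}^{Λ} ρ₀ = 1`. -/
theorem stmt7 (Λ : ℝ) (hΛ : 0 < Λ) :
    ∫ x in (-Λ)..Λ, (1 / π) * (Real.cosh x / Real.cosh (2 * x)) *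
      Real.sqrt (Real.cosh (2 * Λ) / (Real.sinh (Λ - x) * Real.sinh (Λ + x))) = 1 := by
  change ∫ x in (-Λ)..Λ, saddleDensity Λ x = 1
  have hderiv (t : ℝ) : HasDerivWithinAt (saddleSubst Λ) (deriv (saddleSubst Λ) t) univ t :=
    (hasDerivAt_saddleSubst Λ t).differentiableAt.hasDerivAt.hasDerivWithinAt
  rw [intervalIntegral.integral_of_le (by linarith), integral_Ioc_eq_integral_Ioo,
    ← range_saddleSubst hΛ, ← image_univ,
    integral_image_eq_integral_abs_deriv_smul MeasurableSet.univ (fun t _ => hderiv t)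
      (injective_saddleSubst hΛ).injOn, Measure.restrict_univ]
  simp_rw [smul_eq_mul, abs_deriv_saddleSubst_mul_saddleDensity hΛ]
  rw [integral_const_mul, integral_inv_one_add_mul_sq (cosh_pos _)]
  field_simp
end

section
/- Let m ≥ 1 be an integer and let λ₁,…,λ_m be pairwise distinct real numbers. Then the real symmetric m×m matrix H with entries H_{jk} = 2/sinh²(λ_j − λ_k) for j ≠ k and H_{jj} = −∑_{a ≠ j} 2/sinh²(λ_j − λ_a) − 4m/cosh²(2λ_j) is negative definite; equivalently, for every nonzero v ∈ ℝ^m one has vᵀHv = −∑_{j<k} 2(v_j − v_k)²/sinh²(λ_j − λ_k) − ∑_j 4m v_j²/cosh²(2λ_j) < 0. -/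
open Real Finset Matrix

lemma quad_aux {m : ℕ} (c : Fin m → Fin m → ℝ) (hc : ∀ j k, c j k = c k j)
    (d : Fin m → ℝ) (v : Fin m → ℝ) :
    (∑ j, ∑ k, v j *
        ((if j = k then -(∑ a ∈ Finset.univ.erase j, c j a) - d j else c j k) * v k))
      = -(∑ p ∈ Finset.univ.filter (fun p : Fin m × Fin m => p.1 < p.2),
            c p.1 p.2 * (v p.1 - v p.2) ^ 2)
        - ∑ j, d j * v j ^ 2 := by
  classical
  set t : Fin m × Fin m → ℝ :=
    fun p => if p.1 = p.2 then 0 else c p.1 p.2 * (v p.1 * v p.2 - v p.1 * v p.1) with ht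
  have hrow : ∀ j, (∑ k, v j *
      ((if j = k then -(∑ a ∈ Finset.univ.erase j, c j a) - d j else c j k) * v k))
      = (∑ k, t (j, k)) - d j * v j ^ 2 := by
    intro j
    rw [← Finset.add_sum_erase _ _ (Finset.mem_univ j),
        ← Finset.add_sum_erase _ (fun k => t (j, k)) (Finset.mem_univ j)]
    have h0 : t (j, j) = 0 := by simp [ht]
    have h1 : ∑ k ∈ Finset.univ.erase j, v j *
        ((if j = k then -(∑ a ∈ Finset.univ.erase j, c j a) - d j else c j k) * v k)
        = ∑ k ∈ Finset.univ.erase j, c j k * (v j * v k) := by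
      refine Finset.sum_congr rfl fun k hk => ?_
      rw [if_neg (Finset.ne_of_mem_erase hk).symm]; ring
    have h2 : ∑ k ∈ Finset.univ.erase j, t (j, k)
        = ∑ k ∈ Finset.univ.erase j, (c j k * (v j * v k) - c j k * (v j * v j)) := by
      refine Finset.sum_congr rfl fun k hk => ?_
      rw [ht]; simp only
      rw [if_neg (Finset.ne_of_mem_erase hk).symm]; ring
    rw [if_pos rfl, h0, h1, h2, Finset.sum_sub_distrib]
    have h3 : v j * ((-(∑ a ∈ Finset.univ.erase j, c j a) - d j) * v j)
        = -((∑ a ∈ Finset.univ.erase j, c j a) * (v j * v j)) - d j * v j ^ 2 := by ring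
    rw [h3, Finset.sum_mul]
    ring
  rw [Finset.sum_congr rfl fun j _ => hrow j, Finset.sum_sub_distrib]
  have hdouble : (∑ j, ∑ k, t (j, k)) = ∑ p : Fin m × Fin m, t p :=
    (Fintype.sum_prod_type _).symm
  rw [hdouble]
  have hsplit := Finset.sum_filter_add_sum_filter_not (Finset.univ : Finset (Fin m × Fin m))
    (fun p => p.1 < p.2) t
  have hsplit2 := Finset.sum_filter_add_sum_filter_not
    ((Finset.univ : Finset (Fin m × Fin m)).filter (fun p => ¬ p.1 < p.2))
    (fun p => p.2 < p.1) t
  have hzero : ∑ p ∈ ((Finset.univ : Finset (Fin m × Fin m)).filter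
      (fun p => ¬ p.1 < p.2)).filter (fun p => ¬ p.2 < p.1), t p = 0 := by
    refine Finset.sum_eq_zero fun p hp => ?_
    simp only [Finset.mem_filter, Finset.mem_univ, true_and] at hp
    have heq : p.1 = p.2 := le_antisymm (le_of_not_gt hp.2) (le_of_not_gt hp.1)
    simp [ht, heq]
  have hset : ((Finset.univ : Finset (Fin m × Fin m)).filter
      (fun p => ¬ p.1 < p.2)).filter (fun p => p.2 < p.1)
      = (Finset.univ : Finset (Fin m × Fin m)).filter (fun p => p.2 < p.1) := by
    ext p
    simp only [Finset.mem_filter, Finset.mem_univ, true_and]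
    exact ⟨fun h => h.2, fun h => ⟨asymm h, h⟩⟩
  rw [hset, hzero, add_zero] at hsplit2
  have hswap : ∑ p ∈ (Finset.univ : Finset (Fin m × Fin m)).filter (fun p => p.2 < p.1), t p
      = ∑ p ∈ (Finset.univ : Finset (Fin m × Fin m)).filter (fun p => p.1 < p.2), t p.swap := by
    refine Finset.sum_equiv (Equiv.prodComm (Fin m) (Fin m)) (fun p => ?_) (fun p _ => rfl)
    simp [Finset.mem_filter]
  rw [← hsplit, ← hsplit2, hswap, ← Finset.sum_add_distrib]
  have hterm : ∀ p ∈ (Finset.univ : Finset (Fin m × Fin m)).filter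
      (fun p => p.1 < p.2), t p + t p.swap = -(c p.1 p.2 * (v p.1 - v p.2) ^ 2) := by
    intro p hp
    simp only [Finset.mem_filter, Finset.mem_univ, true_and] at hp
    have hne : p.1 ≠ p.2 := ne_of_lt hp
    rw [ht]
    simp only [Prod.fst_swap, Prod.snd_swap]
    rw [if_neg hne, if_neg hne.symm, hc p.2 p.1]
    ring
  rw [Finset.sum_congr rfl hterm, Finset.sum_neg_distrib]

/-- Negative definiteness of (m² times) the Hessian of the saddle-point action for the
emptiness formation probability of the XX chain, together with the explicit quadratic form. -/
theorem stmt9 (m : ℕ) (hm : 1 ≤ m) (lam : Fin m → ℝ) (hinj : Function.Injective lam)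
    (H : Matrix (Fin m) (Fin m) ℝ)
    (hH : ∀ j k : Fin m, H j k =
      if j = k then
        -(∑ a ∈ Finset.univ.erase j, 2 / Real.sinh (lam j - lam a) ^ 2)
          - 4 * m / Real.cosh (2 * lam j) ^ 2
      else 2 / Real.sinh (lam j - lam k) ^ 2) :
    ∀ v : Fin m → ℝ, v ≠ 0 →
      v ⬝ᵥ H.mulVec v =
        -(∑ p ∈ Finset.univ.filter (fun p : Fin m × Fin m => p.1 < p.2),
            2 * (v p.1 - v p.2) ^ 2 / Real.sinh (lam p.1 - lam p.2) ^ 2)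
          - ∑ j : Fin m, 4 * m * v j ^ 2 / Real.cosh (2 * lam j) ^ 2 ∧
      v ⬝ᵥ H.mulVec v < 0 := by
  intro v hv
  have hcsymm : ∀ j k : Fin m,
      (2 : ℝ) / Real.sinh (lam j - lam k) ^ 2 = 2 / Real.sinh (lam k - lam j) ^ 2 := by
    intro j k
    rw [show lam k - lam j = -(lam j - lam k) by ring, Real.sinh_neg, neg_sq]
  have hform : v ⬝ᵥ H.mulVec v =
      -(∑ p ∈ Finset.univ.filter (fun p : Fin m × Fin m => p.1 < p.2),
          2 * (v p.1 - v p.2) ^ 2 / Real.sinh (lam p.1 - lam p.2) ^ 2)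
        - ∑ j : Fin m, 4 * m * v j ^ 2 / Real.cosh (2 * lam j) ^ 2 := by
    have h0 : v ⬝ᵥ H.mulVec v = ∑ j, ∑ k, v j * (H j k * v k) := by
      simp [dotProduct, Matrix.mulVec, Finset.mul_sum]
    rw [h0]
    have h1 : (∑ j, ∑ k, v j * (H j k * v k))
        = ∑ j, ∑ k, v j *
            ((if j = k then
                -(∑ a ∈ Finset.univ.erase j, (2 : ℝ) / Real.sinh (lam j - lam a) ^ 2)
                  - 4 * m / Real.cosh (2 * lam j) ^ 2
              else 2 / Real.sinh (lam j - lam k) ^ 2) * v k) := by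
      refine Finset.sum_congr rfl fun j _ => Finset.sum_congr rfl fun k _ => ?_
      rw [hH j k]
    rw [h1, quad_aux (fun j k => (2 : ℝ) / Real.sinh (lam j - lam k) ^ 2) hcsymm
        (fun j => 4 * m / Real.cosh (2 * lam j) ^ 2) v]
    congr 1
    · congr 1
      exact Finset.sum_congr rfl fun p _ => by ring
    · exact Finset.sum_congr rfl fun j _ => by ring
  refine ⟨hform, ?_⟩
  rw [hform]
  have hA : 0 ≤ ∑ p ∈ Finset.univ.filter (fun p : Fin m × Fin m => p.1 < p.2),
      2 * (v p.1 - v p.2) ^ 2 / Real.sinh (lam p.1 - lam p.2) ^ 2 :=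
    Finset.sum_nonneg fun p _ => by positivity
  have hB : 0 < ∑ j : Fin m, 4 * m * v j ^ 2 / Real.cosh (2 * lam j) ^ 2 := by
    obtain ⟨j0, hj0⟩ : ∃ j, v j ≠ 0 := Function.ne_iff.mp hv
    refine Finset.sum_pos' (fun j _ => by positivity) ⟨j0, Finset.mem_univ j0, ?_⟩
    have hm' : (0 : ℝ) < m := by exact_mod_cast hm
    have hv2 : 0 < v j0 ^ 2 := (sq_nonneg _).lt_of_ne (Ne.symm (pow_ne_zero 2 hj0))
    have hcosh : 0 < Real.cosh (2 * lam j0) ^ 2 := pow_pos (Real.cosh_pos _) 2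
    apply div_pos _ hcosh
    nlinarith
  linarith
end

section
/- Let a < b be real numbers, m ≥ 1 an integer, and f₁,…,f_m, g₁,…,g_m : [a,b] → ℂ continuous functions. Define the degenerate kernel K(p,q) = ∑_{k=1}^m f_k(p) g_k(q) and the m×m matrix M with entries M_{jk} = ∫_a^b f_j(p) g_k(p) dp. Then for every integer n > m the n-fold integral ∫_{[a,b]^n} det_n[ K(p_i, p_j) ]_{i,j=1}^n dp₁…dp_n vanishes, and ∑_{n=0}^∞ (1/n!) ∫_{[a,b]^n} det_n[ K(p_i, p_j) ] dp₁…dp_n = det( I_m + M ), where the n = 0 term of the series is 1 and I_m is the m×m identity matrix. -/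
/-!
Write the kernel matrix as a product `F * G` with `F i k = f_k(p_i)` and `G k j = g_k(p_j)`.
Expanding `det (F * G)` by multilinearity in the rows gives
`∑_{c : Fin n → Fin m} ∏_i f_{c i}(p_i) · det [g_{c i}(p_j)]`, and every term of the Leibniz
expansion of the last determinant is a product of functions of the separate variables `p_i`,
so Fubini integrates the `n`-fold integral to `∑_c det (M.submatrix c c)`. Only injective `c`
contribute, which forces `n ≤ m`; grouping them by their image `s` gives `n!` times the sum of the
principal minors of `M` of size `n`, and the sum of all principal minors is `det (1 + M)`.
-/

open Finset MeasureTheory Matrix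
open scoped Nat

theorem Finset.sum_filter_image_eq_sum_equiv {n β : Type*} [Fintype n] [DecidableEq n]
    [AddCommMonoid β] {k : ℕ} {s : Finset n} (hs : s.card = k) (F : (Fin k → n) → β) :
    ∑ c with univ.image c = s, F c = ∑ e : Fin k ≃ s, F fun i => e i := by
  symm
  refine sum_bij (fun e _ i => e i) (fun e _ => ?_) (fun e₁ _ e₂ _ h => ?_)
    (fun c hc => ?_) fun _ _ => rfl
  · refine mem_filter.mpr ⟨mem_univ _, ?_⟩
    ext x
    simpa using ⟨fun ⟨i, hi⟩ => hi ▸ (e i).2, fun hx => ⟨e.symm ⟨x, hx⟩, by simp⟩⟩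
  · exact Equiv.ext fun i => Subtype.ext (congrFun h i)
  · have hc : univ.image c = s := (mem_filter.mp hc).2
    have hmem (i : Fin k) : c i ∈ s := hc ▸ mem_image_of_mem c (mem_univ i)
    have hsurj : Function.Surjective fun i => (⟨c i, hmem i⟩ : s) := by
      rintro ⟨x, hx⟩
      obtain ⟨i, -, rfl⟩ := mem_image.mp (hc ▸ hx)
      exact ⟨i, rfl⟩
    exact ⟨Equiv.ofBijective _ ((Fintype.bijective_iff_surjective_and_card _).mpr
      ⟨hsurj, by simp [hs]⟩), mem_univ _, rfl⟩

namespace Matrix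

variable {n R : Type*} [CommRing R]

theorem det_submatrix_self_eq_zero_of_not_injective {k : Type*} [Fintype k] [DecidableEq k]
    (M : Matrix n n R) {c : k → n} (hc : ¬ Function.Injective c) :
    (M.submatrix c c).det = 0 := by
  obtain ⟨i, j, hij, hne⟩ := Function.not_injective_iff.mp hc
  exact det_zero_of_row_eq hne (funext fun l => by simp [hij])

theorem det_eq_sum_sign_mul_prod_apply [Fintype n] [DecidableEq n] (A : Matrix n n R) :
    A.det = ∑ σ : Equiv.Perm n, (Equiv.Perm.sign σ : R) * ∏ i, A i (σ i) := by
  rw [← det_transpose, det_apply']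
  rfl

theorem det_mul_eq_sum_prod_mul_det_submatrix {κ : Type*} [Fintype κ] [DecidableEq κ] [Fintype n]
    (F : Matrix κ n R) (G : Matrix n κ R) :
    (F * G).det = ∑ c : κ → n, (∏ i, F i (c i)) * (G.submatrix c id).det := by
  have hrows : (F * G).row = fun i => ∑ k, F i k • G.row k := by
    ext i j
    simp [mul_apply, Finset.sum_apply]
  change detRowAlternating (F * G).row = _
  rw [hrows]
  refine ((detRowAlternating (n := κ) (R := R)).toMultilinearMap.map_sum
    (fun i k => F i k • G.row k)).trans (sum_congr rfl fun c _ => ?_)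
  exact (detRowAlternating (n := κ) (R := R)).map_smul_univ (fun i => F i (c i))
    fun i => G.row (c i)

variable [Fintype n] [DecidableEq n]

theorem det_one_add_eq_sum_det_submatrix (M : Matrix n n R) :
    (1 + M).det = ∑ s : Finset n, (M.submatrix ((↑) : s → n) (↑)).det := by
  rw [add_comm]
  exact (detRowAlternating.map_add_univ M.row (1 : Matrix n n R).row).trans
    (sum_congr rfl fun s _ => det_piecewise_one_eq_submatrix_det M s)

theorem sum_det_submatrix_self_eq_factorial_mul (M : Matrix n n R) (k : ℕ) :
    ∑ c : Fin k → n, (M.submatrix c c).det =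
      k ! * ∑ s ∈ univ.powersetCard k, (M.submatrix (Subtype.val : s → n) Subtype.val).det := by
  rw [← sum_fiberwise univ (fun c : Fin k → n => univ.image c), powersetCard_eq_filter,
    powerset_univ, sum_filter, mul_sum]
  refine sum_congr rfl fun s _ => ?_
  split_ifs with hs
  · rw [sum_filter_image_eq_sum_equiv hs]
    refine (sum_eq_card_nsmul fun e _ =>
      det_submatrix_equiv_self e (M.submatrix Subtype.val Subtype.val)).trans ?_
    rw [card_univ, Fintype.card_equiv (Fintype.equivOfCardEq (by simp [hs])),
      nsmul_eq_mul, Fintype.card_fin]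
  · rw [mul_zero]
    refine sum_eq_zero fun c hc => det_submatrix_self_eq_zero_of_not_injective M fun hinj => hs ?_
    rw [← (mem_filter.mp hc).2, card_image_of_injective _ hinj, card_univ, Fintype.card_fin]

theorem sum_range_one_div_factorial_mul_sum_det_submatrix {K : Type*} [Field K] [CharZero K]
    (M : Matrix n n K) :
    ∑ k ∈ range (Fintype.card n + 1), 1 / (k ! : K) * ∑ c : Fin k → n, (M.submatrix c c).det =
      (1 + M).det := by
  rw [det_one_add_eq_sum_det_submatrix, ← powerset_univ, sum_powerset, card_univ]
  refine sum_congr rfl fun k _ => ?_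
  rw [sum_det_submatrix_self_eq_factorial_mul, ← mul_assoc,
    one_div_mul_cancel (Nat.cast_ne_zero.mpr k.factorial_ne_zero), one_mul]

end Matrix

section DegenerateKernel

variable {α κ ι 𝕜 : Type*} [Fintype κ] [DecidableEq κ] [Fintype ι] [RCLike 𝕜]

theorem det_sum_mul_eq_sum_sign_mul_prod (f g : ι → α → 𝕜) (p : κ → α) :
    (of fun i j => ∑ k, f k (p i) * g k (p j)).det =
      ∑ c : κ → ι, ∑ σ : Equiv.Perm κ,
        (Equiv.Perm.sign σ : 𝕜) * ∏ i, f (c i) (p i) * g (c (σ i)) (p i) := by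
  have hfactor : (of fun i j => ∑ k, f k (p i) * g k (p j)) =
      (of fun i k => f k (p i)) * (of fun k j => g k (p j)) := by
    ext i j
    simp [mul_apply]
  rw [hfactor, det_mul_eq_sum_prod_mul_det_submatrix]
  refine sum_congr rfl fun c _ => ?_
  rw [det_apply', mul_sum]
  refine sum_congr rfl fun σ _ => ?_
  simp only [of_apply, submatrix_apply, id, prod_mul_distrib]
  ring

theorem integral_det_sum_mul_eq_sum_det_integral [MeasurableSpace α] {μ : Measure α}
    [SigmaFinite μ] (f g : ι → α → 𝕜) (hfg : ∀ j k, Integrable (fun x => f j x * g k x) μ) :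
    ∫ p : κ → α, (of fun i j => ∑ k, f k (p i) * g k (p j)).det ∂(Measure.pi fun _ => μ) =
      ∑ c : κ → ι, (of fun i j => ∫ x, f (c i) x * g (c j) x ∂μ).det := by
  have hint (c : κ → ι) (σ : Equiv.Perm κ) : Integrable
      (fun p : κ → α => ∏ i, f (c i) (p i) * g (c (σ i)) (p i)) (Measure.pi fun _ => μ) :=
    Integrable.fintype_prod (f := fun i x => f (c i) x * g (c (σ i)) x) fun i => hfg _ _
  simp_rw [det_sum_mul_eq_sum_sign_mul_prod]
  rw [integral_finsetSum _ fun c _ => integrable_finsetSum _ fun σ _ => (hint c σ).const_mul _]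
  refine sum_congr rfl fun c _ => ?_
  rw [integral_finsetSum _ fun σ _ => (hint c σ).const_mul _, det_eq_sum_sign_mul_prod_apply]
  refine sum_congr rfl fun σ _ => ?_
  rw [integral_const_mul, integral_fintype_prod_eq_prod (fun i x => f (c i) x * g (c (σ i)) x)]
  rfl

end DegenerateKernel

theorem stmt11_general (a b : ℝ) (hab : a < b) (m : ℕ)
    (f g : Fin m → ℝ → ℂ)
    (hf : ∀ k, ContinuousOn (f k) (Set.Icc a b))
    (hg : ∀ k, ContinuousOn (g k) (Set.Icc a b))
    (K : ℝ → ℝ → ℂ) (hK : ∀ p q, K p q = ∑ k : Fin m, f k p * g k q)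
    (M : Matrix (Fin m) (Fin m) ℂ)
    (hM : ∀ j k : Fin m, M j k = ∫ p in a..b, f j p * g k p) :
    (∀ n : ℕ, m < n →
      ∫ p : Fin n → ℝ in Set.univ.pi (fun _ => Set.Icc a b),
        Matrix.det (Matrix.of fun i j : Fin n => K (p i) (p j)) = 0) ∧
    ∑' n : ℕ, (1 / (n.factorial : ℂ)) *
        ∫ p : Fin n → ℝ in Set.univ.pi (fun _ => Set.Icc a b),
          Matrix.det (Matrix.of fun i j : Fin n => K (p i) (p j)) =
      Matrix.det (1 + M) := by
  obtain rfl : K = fun p q => ∑ k, f k p * g k q := funext₂ hK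
  have hfg (j k : Fin m) : Integrable (fun x => f j x * g k x) (volume.restrict (Set.Icc a b)) :=
    ((hf j).mul (hg k)).integrableOn_compact isCompact_Icc
  have hM' : M = of fun j k => ∫ x in Set.Icc a b, f j x * g k x := by
    ext j k
    rw [hM, of_apply, intervalIntegral.integral_of_le hab.le, integral_Icc_eq_integral_Ioc]
  have hterm (n : ℕ) : ∫ p : Fin n → ℝ in Set.univ.pi fun _ => Set.Icc a b,
      (of fun i j => ∑ k, f k (p i) * g k (p j)).det = ∑ c : Fin n → Fin m, (M.submatrix c c).det := by
    rw [volume_pi, Measure.restrict_pi_pi, integral_det_sum_mul_eq_sum_det_integral f g hfg, hM']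
    rfl
  have hvanish (n : ℕ) (hn : m < n) : ∫ p : Fin n → ℝ in Set.univ.pi fun _ => Set.Icc a b,
      (of fun i j => ∑ k, f k (p i) * g k (p j)).det = 0 := by
    rw [hterm]
    refine sum_eq_zero fun c _ => det_submatrix_self_eq_zero_of_not_injective M fun hc => ?_
    exact hn.not_ge (by simpa using Fintype.card_le_of_injective c hc)
  refine ⟨hvanish, ?_⟩
  rw [tsum_eq_sum (s := range (m + 1)) fun n hn => by
      rw [hvanish n (by simpa using hn), mul_zero],
    ← sum_range_one_div_factorial_mul_sum_det_submatrix, Fintype.card_fin]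
  simp_rw [hterm]

/-- Fredholm determinant of a degenerate kernel `K(p,q) = ∑_{k=1}^m f_k(p) g_k(q)` on `[a,b]`:
the terms of the Fredholm series with `n > m` vanish, and the series equals the finite
determinant `det(I_m + M)` with `M_{jk} = ∫_a^b f_j g_k`. -/
theorem stmt11 (a b : ℝ) (hab : a < b) (m : ℕ) (hm : 1 ≤ m)
    (f g : Fin m → ℝ → ℂ)
    (hf : ∀ k, ContinuousOn (f k) (Set.Icc a b))
    (hg : ∀ k, ContinuousOn (g k) (Set.Icc a b))
    (K : ℝ → ℝ → ℂ) (hK : ∀ p q, K p q = ∑ k : Fin m, f k p * g k q)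
    (M : Matrix (Fin m) (Fin m) ℂ)
    (hM : ∀ j k : Fin m, M j k = ∫ p in a..b, f j p * g k p) :
    (∀ n : ℕ, m < n →
      ∫ p : Fin n → ℝ in Set.univ.pi (fun _ => Set.Icc a b),
        Matrix.det (Matrix.of fun i j : Fin n => K (p i) (p j)) = 0) ∧
    ∑' n : ℕ, (1 / (n.factorial : ℂ)) *
        ∫ p : Fin n → ℝ in Set.univ.pi (fun _ => Set.Icc a b),
          Matrix.det (Matrix.of fun i j : Fin n => K (p i) (p j)) =
      Matrix.det (1 + M) :=
  stmt11_general a b hab m f g hf hg K hK M hM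
end

section
/- Let m ≥ 2 and define the m×m real matrix a as follows: for 1 ≤ j ≤ m−1, a_{jk} = 0 if j − k is even and a_{jk} = (−1)^{(j−k−1)/2}/(j−k) if j − k is odd; for the last row, a_{mk} = 0 if k is even and a_{mk} = (−1)^{(k−1)/2}/k if k is odd. Then det_m(a) = −det_{⌊m/2⌋}[ 1/(2j − 2k − 1) ]_{j,k=1}^{⌊m/2⌋} · det_{⌊(m+1)/2⌋}[ 1/(2j − 2k − 1) ]_{j,k=1}^{⌊(m+1)/2⌋}. -/
/-!
The entries of `A` are `c (j - k)` with `c = halfBandCoeff`, except that the last row is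
`c (-1 - k)`: it is the row `j = -1` of the same Toeplitz matrix. Moving it to the top, a cyclic
permutation of sign `(-1) ^ (m - 1)`, gives the Toeplitz matrix `c (j - k - 1)`, which vanishes
unless `j ≡ k mod 2`. Sorting indices by parity makes it block diagonal with blocks
`[(-1) ^ (J - K - 1) / (2J - 2K - 1)]`, and conjugating by `diag ((-1) ^ J)` turns each block into
`-[1 / (2J - 2K - 1)]`. The signs `(-1) ^ (m - 1) (-1) ^ ⌊m/2⌋ (-1) ^ ⌊(m+1)/2⌋` multiply to `-1`.
-/

open Finset Matrix

namespace Matrix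

theorem det_of_div_mul {n K : Type*} [Fintype n] [DecidableEq n] [Field K] (s : n → K)
    (hs : ∀ i, s i ≠ 0) (M : Matrix n n K) :
    det (of fun i j => s i / s j * M i j) = det M := by
  have h : (of fun i j => s i / s j * M i j) =
      of fun i j => s i * (of fun i j => (s j)⁻¹ * M i j) i j := by
    ext i j
    simp only [of_apply]
    ring
  rw [h, det_mul_column, det_mul_row, ← mul_assoc, prod_inv_distrib,
    mul_inv_cancel₀ (prod_ne_zero_iff.2 fun i _ => hs i), one_mul]

end Matrix

noncomputable def finEvenOddEquiv (m : ℕ) : Fin ((m + 1) / 2) ⊕ Fin (m / 2) ≃ Fin m :=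
  Equiv.ofBijective
    (Sum.elim (fun j => ⟨2 * j, by omega⟩) (fun j => ⟨2 * j + 1, by omega⟩)) <| by
    rw [Fintype.bijective_iff_injective_and_card]
    refine ⟨?_, by simp only [Fintype.card_sum, Fintype.card_fin]; omega⟩
    rintro (i | i) (j | j) h <;> simp only [Sum.elim_inl, Sum.elim_inr, Fin.mk.injEq] at h <;>
      first | omega | simp only [Sum.inl.injEq, Sum.inr.injEq]; omega

@[simp]
theorem finEvenOddEquiv_inl (m : ℕ) (j : Fin ((m + 1) / 2)) :
    (finEvenOddEquiv m (.inl j) : ℕ) = 2 * j := rfl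

@[simp]
theorem finEvenOddEquiv_inr (m : ℕ) (j : Fin (m / 2)) :
    (finEvenOddEquiv m (.inr j) : ℕ) = 2 * j + 1 := rfl

theorem det_toeplitz_eq_mul_of_odd_eq_zero {R : Type*} [CommRing R] (m : ℕ) (g : ℤ → R)
    (hg : ∀ n, Odd n → g n = 0) :
    det (of fun i k : Fin m => g (i - k)) =
      det (of fun i k : Fin ((m + 1) / 2) => g (2 * (i - k))) *
        det (of fun i k : Fin (m / 2) => g (2 * (i - k))) := by
  rw [← det_submatrix_equiv_self (finEvenOddEquiv m), ← det_fromBlocks_zero₁₂]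
  congr 1
  ext (i | i) (k | k) <;>
    simp only [submatrix_apply, of_apply, fromBlocks_apply₁₁, fromBlocks_apply₁₂,
      fromBlocks_apply₂₁, fromBlocks_apply₂₂, Matrix.zero_apply, finEvenOddEquiv_inl,
      finEvenOddEquiv_inr, Nat.cast_add, Nat.cast_mul, Nat.cast_ofNat, Nat.cast_one]
  · ring_nf
  · exact hg _ ⟨i - k - 1, by ring⟩
  · exact hg _ ⟨i - k, by ring⟩
  · ring_nf

/-- `halfBandCoeff n = sin (π n / 2) / n` for `n ≠ 0`: the entry `a_{jk}` of the paper's matrix as a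
function of `n = j - k`. -/
noncomputable def halfBandCoeff (n : ℤ) : ℝ :=
  if Even n then 0 else (-1 : ℝ) ^ ((n - 1) / 2) / n

theorem halfBandCoeff_sub_one_of_odd {n : ℤ} (hn : Odd n) : halfBandCoeff (n - 1) = 0 :=
  if_pos (hn.sub_odd odd_one)

theorem halfBandCoeff_two_mul_sub_one (n : ℤ) :
    halfBandCoeff (2 * n - 1) = -((-1) ^ n / (2 * n - 1)) := by
  have hodd : ¬Even (2 * n - 1) := Int.not_even_iff_odd.2 ⟨n - 1, by ring⟩
  rw [halfBandCoeff, if_neg hodd, show (2 * n - 1 - 1) / 2 = n - 1 by omega,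
    zpow_sub_one₀ (by norm_num)]
  push_cast
  ring

theorem halfBandCoeff_neg_sub_one (k : ℕ) :
    halfBandCoeff (-k - 1) =
      if Even (k + 1) then 0 else (-1 : ℝ) ^ (k / 2) / ((k + 1 : ℕ) : ℝ) := by
  obtain ⟨j, rfl | rfl⟩ := Nat.even_or_odd' k
  · have hodd : ¬Even (2 * j + 1) := Nat.not_even_iff_odd.2 ⟨j, rfl⟩
    rw [show -((2 * j : ℕ) : ℤ) - 1 = 2 * (-j : ℤ) - 1 by push_cast; ring,
      halfBandCoeff_two_mul_sub_one, if_neg hodd, Nat.mul_div_cancel_left _ two_pos,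
      _root_.zpow_neg, zpow_natCast, ← inv_pow, inv_neg_one, ← div_neg]
    push_cast
    ring
  · have heven : Even (2 * j + 1 + 1) := ⟨j + 1, by ring⟩
    rw [halfBandCoeff, if_pos ⟨-j - 1, by push_cast; ring⟩, if_pos heven]

theorem det_halfBandCoeff (n : ℕ) :
    det (of fun i k : Fin n => halfBandCoeff (2 * (i - k) - 1)) =
      (-1) ^ n * det (of fun j k : Fin n => (1 : ℝ) / (2 * (j : ℕ) - 2 * (k : ℕ) - 1 : ℝ)) := by
  set H : Matrix (Fin n) (Fin n) ℝ := of fun j k => 1 / (2 * (j : ℕ) - 2 * (k : ℕ) - 1 : ℝ)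
  have h : (of fun i k : Fin n => halfBandCoeff (2 * (i - k) - 1)) =
      -of fun i k : Fin n => (-1 : ℝ) ^ (i : ℤ) / (-1) ^ (k : ℤ) * H i k := by
    ext i k
    rw [of_apply, halfBandCoeff_two_mul_sub_one, neg_apply, of_apply,
      ← zpow_sub₀ (by norm_num)]
    simp only [H, of_apply]
    push_cast
    ring
  rw [h, det_neg, det_of_div_mul _ (fun _ => by simp), Fintype.card_fin]

/-- Rows and columns are indexed from `0`: row `j` of the paper is row `⟨j - 1⟩ : Fin m` here. -/
theorem stmt12 (m : ℕ) (hm : 2 ≤ m) (A : Matrix (Fin m) (Fin m) ℝ)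
    (hA : ∀ j k : Fin m, A j k =
      if (j : ℕ) + 1 < m then
        (if Even ((j : ℤ) - (k : ℤ)) then 0
          else (-1 : ℝ) ^ (((j : ℤ) - (k : ℤ) - 1) / 2) / ((((j : ℤ) - (k : ℤ)) : ℤ) : ℝ))
      else
        (if Even ((k : ℕ) + 1) then 0
          else (-1 : ℝ) ^ (((k : ℕ) : ℕ) / 2) / (((k : ℕ) + 1 : ℕ) : ℝ))) :
    A.det =
      -(Matrix.det (Matrix.of fun j k : Fin (m / 2) =>
          (1 : ℝ) / (2 * (j : ℕ) - 2 * (k : ℕ) - 1 : ℝ))) *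
        Matrix.det (Matrix.of fun j k : Fin ((m + 1) / 2) =>
          (1 : ℝ) / (2 * (j : ℕ) - 2 * (k : ℕ) - 1 : ℝ)) := by
  obtain ⟨n, rfl⟩ : ∃ n, m = n + 1 := ⟨m - 1, by omega⟩
  have hA_rot : A = (of fun i k : Fin (n + 1) => halfBandCoeff (i - k - 1)).submatrix
      (finRotate (n + 1)) id := by
    ext j k
    rw [hA, submatrix_apply, of_apply, id]
    by_cases hj : (j : ℕ) + 1 < n + 1
    · rw [if_pos hj, coe_finRotate_of_ne_last fun h => by simp [h] at hj]
      rw [show (((j + 1 : ℕ) : ℤ) - k - 1) = j - k by push_cast; ring]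
      rfl
    · rw [if_neg hj, show j = Fin.last n from Fin.ext (by rw [Fin.val_last]; omega), finRotate_last,
        Fin.val_zero, Nat.cast_zero, zero_sub, halfBandCoeff_neg_sub_one]
  have hsign : (-1 : ℝ) ^ n * ((-1) ^ ((n + 1 + 1) / 2) * (-1) ^ ((n + 1) / 2)) = -1 := by
    rw [← pow_add, show (n + 1 + 1) / 2 + (n + 1) / 2 = n + 1 by omega, ← pow_add]
    exact Odd.neg_one_pow ⟨n, by ring⟩
  rw [hA_rot, det_permute, sign_finRotate,
    det_toeplitz_eq_mul_of_odd_eq_zero _ (fun n => halfBandCoeff (n - 1))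
      (fun _ => halfBandCoeff_sub_one_of_odd), det_halfBandCoeff, det_halfBandCoeff]
  have hsign_mul : ∀ x y : ℝ,
      (-1) ^ n * ((-1) ^ ((n + 1 + 1) / 2) * x * ((-1) ^ ((n + 1) / 2) * y)) = -y * x :=
    fun x y => by linear_combination (x * y) * hsign
  push_cast
  exact hsign_mul _ _
end

section
/- For every integer N ≥ 1, the determinant of the N×N matrix with entries 1/(2j − 2k − 1), 1 ≤ j,k ≤ N, equals (−1)^N (π/2)^N ∏_{k=1}^N Γ(k)² / ( Γ(k − 1/2) Γ(k + 1/2) ), where Γ is the Euler Gamma function. -/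
open Finset Real

/-- One step of the Cauchy determinant reduction. -/
lemma cauchy_step (n : ℕ) (x y : Fin (n + 1) → ℝ) (hxy : ∀ i j, x i - y j ≠ 0) :
    Matrix.det (Matrix.of fun i j => (x i - y j)⁻¹) =
      ((∏ j, (x 0 - y j)⁻¹) * ∏ i : Fin n,
          ((x 0 - x i.succ) * (y i.succ - y 0) * (x i.succ - y 0)⁻¹)) *
        Matrix.det (Matrix.of fun i j : Fin n => (x i.succ - y j.succ)⁻¹) := by
  -- Step 1: subtract row 0 from the other rows.
  have h1 : Matrix.det (Matrix.of fun i j : Fin (n+1) => (x i - y j)⁻¹) =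
      Matrix.det (Matrix.of fun i j : Fin (n+1) =>
        if i = 0 then (x 0 - y j)⁻¹ else (x i - y j)⁻¹ - (x 0 - y j)⁻¹) := by
    apply Matrix.det_eq_of_forall_row_eq_smul_add_const
      (c := fun i : Fin (n+1) => if i = 0 then 0 else 1) (k := 0) (by simp)
    intro i j
    by_cases hi : i = 0 <;> simp [hi] <;> ring
  -- Step 2: factor out `(x 0 - y j)⁻¹` from column j and `(x 0 - x i)` from row i.
  have h2 : Matrix.det (Matrix.of fun i j : Fin (n+1) =>
        if i = 0 then (x 0 - y j)⁻¹ else (x i - y j)⁻¹ - (x 0 - y j)⁻¹) =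
      (∏ j, (x 0 - y j)⁻¹) * ((∏ i : Fin (n+1), if i = 0 then (1:ℝ) else (x 0 - x i)) *
        Matrix.det (Matrix.of fun i j : Fin (n+1) =>
          if i = 0 then (1:ℝ) else (x i - y j)⁻¹)) := by
    rw [← Matrix.det_mul_column, ← Matrix.det_mul_row]
    congr 1
    ext i j
    by_cases hi : i = 0
    · simp [hi]
    · simp only [Matrix.of_apply, if_neg hi]
      have hij := hxy i j
      have h0j := hxy 0 j
      field_simp
      try ring
      try (left; ring)
  -- Step 3: subtract column 0 from the other columns.
  have h3 : Matrix.det (Matrix.of fun i j : Fin (n+1) =>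
        if i = 0 then (1:ℝ) else (x i - y j)⁻¹) =
      Matrix.det (Matrix.of fun i j : Fin (n+1) =>
        if j = 0 then (if i = 0 then (1:ℝ) else (x i - y 0)⁻¹)
        else (if i = 0 then (0:ℝ) else (x i - y j)⁻¹ - (x i - y 0)⁻¹)) := by
    rw [← Matrix.det_transpose (Matrix.of fun i j : Fin (n+1) =>
        if i = 0 then (1:ℝ) else (x i - y j)⁻¹),
      ← Matrix.det_transpose (Matrix.of fun i j : Fin (n+1) =>
        if j = 0 then (if i = 0 then (1:ℝ) else (x i - y 0)⁻¹)
        else (if i = 0 then (0:ℝ) else (x i - y j)⁻¹ - (x i - y 0)⁻¹))]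
    apply Matrix.det_eq_of_forall_row_eq_smul_add_const
      (c := fun j : Fin (n+1) => if j = 0 then 0 else 1) (k := 0) (by simp)
    intro j i
    by_cases hj : j = 0 <;> by_cases hi : i = 0 <;>
      simp [Matrix.transpose_apply, hi, hj] <;> ring
  -- Step 4: expand along the first row (which is (1,0,...,0)).
  have h4 : Matrix.det (Matrix.of fun i j : Fin (n+1) =>
        if j = 0 then (if i = 0 then (1:ℝ) else (x i - y 0)⁻¹)
        else (if i = 0 then (0:ℝ) else (x i - y j)⁻¹ - (x i - y 0)⁻¹)) =
      Matrix.det (Matrix.of fun i j : Fin n =>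
        (x i.succ - y j.succ)⁻¹ - (x i.succ - y 0)⁻¹) := by
    rw [Matrix.det_succ_row_zero]
    rw [Finset.sum_eq_single 0]
    · norm_num
      try congr 1
    · intro b _ hb
      simp [hb]
    · simp
  -- Step 5: factor the remaining matrix.
  have h5 : Matrix.det (Matrix.of fun i j : Fin n =>
        (x i.succ - y j.succ)⁻¹ - (x i.succ - y 0)⁻¹) =
      (∏ j : Fin n, (y j.succ - y 0)) * ((∏ i : Fin n, (x i.succ - y 0)⁻¹) *
        Matrix.det (Matrix.of fun i j : Fin n => (x i.succ - y j.succ)⁻¹)) := by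
    rw [← Matrix.det_mul_column, ← Matrix.det_mul_row]
    congr 1
    ext i j
    simp only [Matrix.of_apply]
    have h1' := hxy i.succ j.succ
    have h2' := hxy i.succ 0
    field_simp
    try ring
    try (left; ring)
  rw [h1, h2, h3, h4, h5]
  have h6 : (∏ i : Fin (n+1), if i = 0 then (1:ℝ) else (x 0 - x i)) =
      ∏ i : Fin n, (x 0 - x i.succ) := by
    rw [Fin.prod_univ_succ]
    simp [Fin.succ_ne_zero]
  rw [h6, Finset.prod_mul_distrib, Finset.prod_mul_distrib]
  ring

/-- `P n = ∏_{i<n} (i + 1/2)`. -/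
noncomputable def Phalf (n : ℕ) : ℝ := ∏ i : Fin n, ((i : ℝ) + 1/2)

lemma Phalf_pos (n : ℕ) : 0 < Phalf n := by
  apply Finset.prod_pos
  intro i _
  positivity

lemma Phalf_succ (n : ℕ) : Phalf (n+1) = Phalf n * ((n : ℝ) + 1/2) := by
  rw [Phalf, Fin.prod_univ_castSucc]
  simp [Phalf]

lemma gamma_half (n : ℕ) : Real.Gamma ((n : ℝ) + 1/2) = Phalf n * Real.sqrt π := by
  induction n with
  | zero =>
    rw [show ((0:ℕ):ℝ) + 1/2 = 1/2 by norm_num, Real.Gamma_one_half_eq]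
    simp [Phalf]
  | succ n ih =>
    have h : ((n:ℝ) + 1 + 1/2) = ((n:ℝ) + 1/2) + 1 := by ring
    push_cast
    rw [h, Real.Gamma_add_one (by positivity), ih, Phalf_succ]
    ring

lemma prod_fin_add_one (n : ℕ) : (∏ i : Fin n, ((i : ℝ) + 1)) = (Nat.factorial n : ℝ) := by
  induction n with
  | zero => simp
  | succ n ih =>
    rw [Fin.prod_univ_castSucc]
    simp only [Fin.coe_castSucc, Fin.val_last]
    rw [ih, Nat.factorial_succ]
    push_cast
    ring

lemma prod_odd (n : ℕ) : (∏ i : Fin n, (2 * (i : ℝ) + 1)) = 2^n * Phalf n := by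
  have h : ∀ i : Fin n, 2 * (i : ℝ) + 1 = 2 * ((i : ℝ) + 1/2) := fun i => by ring
  simp_rw [h]
  rw [Finset.prod_mul_distrib, Finset.prod_const, Finset.card_univ, Fintype.card_fin, Phalf]

/-- The key statement, for all `N` (including `N = 0`). -/
lemma stmt13_key (N : ℕ) :
    Matrix.det (Matrix.of fun j k : Fin N =>
        (1 : ℝ) / (2 * (j : ℕ) - 2 * (k : ℕ) - 1 : ℝ)) =
      (-1) ^ N * (π / 2) ^ N *
        ∏ k ∈ Finset.Icc 1 N, Real.Gamma (k : ℝ) ^ 2 /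
          (Real.Gamma ((k : ℝ) - 1 / 2) * Real.Gamma ((k : ℝ) + 1 / 2)) := by
  induction N with
  | zero => simp
  | succ N ih =>
    -- rewrite matrix as Cauchy
    set x : Fin (N+1) → ℝ := fun i => 2 * (i : ℕ)
    set y : Fin (N+1) → ℝ := fun j => 2 * (j : ℕ) + 1
    have hxy : ∀ i j : Fin (N+1), x i - y j ≠ 0 := by
      intro i j
      have : ((2 * (i:ℤ) - 2 * (j:ℤ) - 1 : ℤ) : ℝ) ≠ 0 := by
        rw [Int.cast_ne_zero]
        omega
      push_cast at this ⊢
      simp only [x, y]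
      push_cast
      intro h
      apply this
      linarith
    have hmat : (Matrix.of fun j k : Fin (N+1) =>
        (1 : ℝ) / (2 * (j : ℕ) - 2 * (k : ℕ) - 1 : ℝ)) =
        (Matrix.of fun i j => (x i - y j)⁻¹) := by
      ext i j
      simp only [Matrix.of_apply, one_div, x, y]
      ring_nf
    rw [hmat, cauchy_step N x y hxy]
    have hmat2 : (Matrix.of fun i j : Fin N => (x i.succ - y j.succ)⁻¹) =
        (Matrix.of fun j k : Fin N =>
          (1 : ℝ) / (2 * (j : ℕ) - 2 * (k : ℕ) - 1 : ℝ)) := by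
      ext i j
      simp only [Matrix.of_apply, one_div, x, y, Fin.val_succ]
      push_cast
      ring_nf
    rw [hmat2, ih]
    -- Now compute the scalar factor.
    have hx0 : x 0 = 0 := by simp [x]
    have hprod1 : (∏ j : Fin (N+1), (x 0 - y j)⁻¹) =
        (-1)^(N+1) * (2^(N+1) * Phalf (N+1))⁻¹ := by
      rw [← prod_odd]
      rw [← Finset.prod_inv_distrib]
      rw [show ((-1:ℝ))^(N+1) = ∏ _j : Fin (N+1), (-1:ℝ) by simp]
      rw [← Finset.prod_mul_distrib]
      apply Finset.prod_congr rfl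
      intro j _
      rw [hx0]
      simp only [y]
      rw [show (0 : ℝ) - (2 * (j:ℕ) + 1) = -(2 * (j:ℕ) + 1) by ring]
      rw [inv_neg]
      ring
    have hfac : (∏ i : Fin N, (2 * ((i:ℝ)+1))) = 2^N * (Nat.factorial N : ℝ) := by
      rw [Finset.prod_mul_distrib, Finset.prod_const, Finset.card_univ, Fintype.card_fin,
        prod_fin_add_one]
    have hprod2 : (∏ i : Fin N, ((x 0 - x i.succ) * (y i.succ - y 0) * (x i.succ - y 0)⁻¹)) =
        ((-1)^N * (2^N * (Nat.factorial N : ℝ)) * (2^N * (Nat.factorial N : ℝ))) *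
          (2^N * Phalf N)⁻¹ := by
      have step : ∀ i : Fin N, (x 0 - x i.succ) * (y i.succ - y 0) * (x i.succ - y 0)⁻¹ =
          ((-1) * (2 * ((i:ℝ)+1)) * (2 * ((i:ℝ)+1))) * (2*(i:ℝ)+1)⁻¹ := by
        intro i
        simp only [x, y, Fin.val_succ, Fin.val_zero]
        push_cast
        congr 1
        · ring
        · congr 1
          ring
      simp_rw [step]
      rw [Finset.prod_mul_distrib, Finset.prod_inv_distrib, prod_odd]
      congr 1
      rw [Finset.prod_mul_distrib, Finset.prod_mul_distrib, Finset.prod_const,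
        Finset.card_univ, Fintype.card_fin, hfac]
    rw [hprod1, hprod2]
    -- RHS product split.
    rw [Finset.prod_Icc_succ_top (by omega : 1 ≤ N + 1)]
    have hg1 : Real.Gamma ((N+1 : ℕ) : ℝ) = (Nat.factorial N : ℝ) := by
      rw [show (((N+1 : ℕ)) : ℝ) = (N : ℝ) + 1 by push_cast; ring]
      exact Real.Gamma_nat_eq_factorial N
    have hg2 : Real.Gamma (((N+1 : ℕ) : ℝ) - 1/2) = Phalf N * Real.sqrt π := by
      rw [show (((N+1 : ℕ) : ℝ) - 1/2) = (N : ℝ) + 1/2 by push_cast; ring]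
      exact gamma_half N
    have hg3 : Real.Gamma (((N+1 : ℕ) : ℝ) + 1/2) = Phalf (N+1) * Real.sqrt π := by
      rw [show (((N+1 : ℕ) : ℝ) + 1/2) = ((N+1 : ℕ) : ℝ) + 1/2 by push_cast; ring]
      exact_mod_cast gamma_half (N+1)
    rw [hg1, hg2, hg3]
    have hsq : Real.sqrt π * Real.sqrt π = π := Real.mul_self_sqrt Real.pi_pos.le
    have hPN := Phalf_pos N
    have hPN1 := Phalf_pos (N+1)
    have hNfac : (0:ℝ) < (Nat.factorial N : ℝ) := by positivity
    have hpi := Real.pi_pos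
    have hsqrtpi : (0:ℝ) < Real.sqrt π := Real.sqrt_pos.mpr hpi
    rw [show Phalf N * √π * (Phalf (N+1) * √π) = Phalf N * Phalf (N+1) * π by
      linear_combination Phalf N * Phalf (N+1) * hsq]
    have hPN' := hPN.ne'
    have hPN1' := hPN1.ne'
    have h2n : ((2:ℝ))^N ≠ 0 := by positivity
    have hpi' := hpi.ne'
    have hNfac' := hNfac.ne'
    clear hmat hmat2 hxy hprod1 hprod2 hfac hx0 ih hg1 hg2 hg3 hsq hsqrtpi
    clear x y
    generalize (∏ k ∈ Finset.Icc 1 N, Real.Gamma (k : ℝ) ^ 2 /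
          (Real.Gamma ((k : ℝ) - 1 / 2) * Real.Gamma ((k : ℝ) + 1 / 2))) = X
    generalize hF : (Nat.factorial N : ℝ) = F at hNfac hNfac'
    rcases Nat.even_or_odd N with hpar | hpar
    · simp only [pow_succ, hpar.neg_one_pow]
      field_simp
    · simp only [pow_succ, hpar.neg_one_pow]
      field_simp

/-- Cauchy-type determinant evaluation:
`det_N [1/(2j-2k-1)] = (-1)^N (π/2)^N ∏_{k=1}^N Γ(k)²/(Γ(k-1/2)Γ(k+1/2))`
(rows and columns 1-indexed). -/
theorem stmt13 (N : ℕ) (hN : 1 ≤ N) :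
    Matrix.det (Matrix.of fun j k : Fin N =>
        (1 : ℝ) / (2 * (j : ℕ) - 2 * (k : ℕ) - 1 : ℝ)) =
      (-1) ^ N * (π / 2) ^ N *
        ∏ k ∈ Finset.Icc 1 N, Real.Gamma (k : ℝ) ^ 2 /
          (Real.Gamma ((k : ℝ) - 1 / 2) * Real.Gamma ((k : ℝ) + 1 / 2)) := by
  exact stmt13_key N
end

section
/- For integers N ≥ 1, define φ_N = −∑_{k=1}^N log( Γ(k)² / ( Γ(k − 1/2) Γ(k + 1/2) ) ), where Γ is the Euler Gamma function. Then the improper integral ∫_0^∞ (1/t)( e^{−4t} − 1/cosh²(t) ) dt converges, and lim_{N→∞} ( φ_N − (1/4) log N ) = −(1/4) ∫_0^∞ (1/t)( e^{−4t} − 1/cosh²(t) ) dt. -/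
/-!
Put `D x = log Γ(x - 1/2) + log Γ(x + 1/2) - 2 log Γ(x)`, so that `φ_N = ∑_{k=1}^N D k`.
Log-convexity of `Γ` gives `0 ≤ D x ≤ 1 / (2 (x - 1))`, so `D x → 0`, while the functional
equation gives `D x - D (x + 1) = 2 log x - log (x - 1/2) - log (x + 1/2)`. By Frullani's integral
this difference is `∫₀^∞ 4 e^{-4xs} sinh² s / s ds`; telescoping and summing the geometric series
under the integral yields `D x = ∫₀^∞ e^{-(4x-2)s} tanh s / s ds`, and summing over `k ≤ N` gives
`φ_N = ∫₀^∞ (1 - e^{-4Ns}) / (4 s cosh² s) ds`. Subtracting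
`log N = ∫₀^∞ (e^{-4s} - e^{-4Ns}) / s ds` (Frullani again) leaves `-1/4` times the target integral
plus `1/4 ∫₀^∞ e^{-4Ns} tanh² s / s ds`, which is at most `1 / (16 N)` because `tanh² s ≤ s`.
-/

open Real MeasureTheory Finset Filter Topology

namespace Real

@[fun_prop]
theorem continuous_tanh : Continuous tanh := by
  simp only [funext tanh_eq_sinh_div_cosh]
  exact continuous_sinh.div continuous_cosh fun x => (cosh_pos x).ne'

theorem tanh_nonneg {x : ℝ} (hx : 0 ≤ x) : 0 ≤ tanh x := by
  rw [tanh_eq_sinh_div_cosh]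
  exact div_nonneg (sinh_nonneg_iff.2 hx) (cosh_pos x).le

theorem sinh_le_mul_cosh {x : ℝ} (hx : 0 ≤ x) : sinh x ≤ x * cosh x := by
  have hmono : MonotoneOn (fun y => y * cosh y - sinh y) (Set.Ici 0) := by
    refine monotoneOn_of_deriv_nonneg (convex_Ici 0) (by fun_prop) (by fun_prop) fun y hy => ?_
    have hd : HasDerivAt (fun y => y * cosh y - sinh y) (1 * cosh y + y * sinh y - cosh y) y :=
      ((hasDerivAt_id' y).mul (hasDerivAt_cosh y)).sub (hasDerivAt_sinh y)
    rw [interior_Ici] at hy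
    rw [hd.deriv, one_mul, add_sub_cancel_left]
    exact mul_nonneg hy.out.le (sinh_nonneg_iff.2 hy.out.le)
  simpa using hmono Set.self_mem_Ici hx hx

theorem tanh_le_self {x : ℝ} (hx : 0 ≤ x) : tanh x ≤ x := by
  rw [tanh_eq_sinh_div_cosh, div_le_iff₀ (cosh_pos x)]
  exact sinh_le_mul_cosh hx

theorem tanh_sq_le_self {x : ℝ} (hx : 0 ≤ x) : tanh x ^ 2 ≤ x := by
  rw [sq]
  exact mul_le_mul (tanh_le_self hx) (tanh_lt_one x).le (tanh_nonneg hx) hx |>.trans_eq (mul_one x)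

theorem one_sub_exp_neg_four_mul (s : ℝ) :
    1 - exp (-(4 * s)) = 4 * exp (-(2 * s)) * sinh s * cosh s := by
  rw [sinh_eq, cosh_eq]
  have h1 : exp (-(4 * s)) = exp (-(2 * s)) * exp (-s) * exp (-s) := by
    rw [← exp_add, ← exp_add]; ring_nf
  have h2 : exp (-(2 * s)) * exp s * exp s = 1 := by
    rw [← exp_add, ← exp_add]; ring_nf; exact exp_zero
  linear_combination -h2 - h1

theorem integrableOn_inv_mul_exp_neg_sub_exp_neg {a b : ℝ} (ha : 0 < a) (hb : 0 < b) :
    IntegrableOn (fun x => x⁻¹ * (exp (-(a * x)) - exp (-(b * x)))) (Set.Ioi 0) := by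
  wlog hab : a ≤ b generalizing a b
  · refine (this hb ha (le_of_not_ge hab)).neg.congr_fun (fun x _ => ?_) measurableSet_Ioi
    simp only [Pi.neg_apply]; ring
  refine ((exp_neg_integrableOn_Ioi 0 ha).const_mul (b - a)).mono' (by fun_prop) ?_
  refine (ae_restrict_iff' measurableSet_Ioi).2 (Eventually.of_forall fun x (hx : 0 < x) => ?_)
  -- `e^{-ax} - e^{-bx} = e^{-ax} (1 - e^{-(b-a)x}) ≤ (b - a) x e^{-ax}`
  have hsplit : exp (-(b * x)) = exp (-(a * x)) * exp (-((b - a) * x)) := by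
    rw [← exp_add]; ring_nf
  have hlow := add_one_le_exp (-((b - a) * x))
  have hdiff : 0 ≤ exp (-(a * x)) - exp (-(b * x)) :=
    sub_nonneg.2 (exp_le_exp.2 (by nlinarith))
  rw [norm_mul, norm_inv, Real.norm_of_nonneg hx.le, Real.norm_of_nonneg hdiff,
    inv_mul_le_iff₀ hx, neg_mul]
  nlinarith [exp_pos (-(a * x))]

theorem integral_inv_mul_exp_neg_sub_exp_neg {a b : ℝ} (ha : 0 < a) (hb : 0 < b) :
    ∫ x in Set.Ioi 0, x⁻¹ * (exp (-(a * x)) - exp (-(b * x))) = log (b / a) := by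
  have hcont : Continuous fun x : ℝ => exp (-x) := by fun_prop
  simpa using Frullani.integral_Ioi_eq (hcont.locallyIntegrable.locallyIntegrableOn _) ha hb
    ((hcont.tendsto' 0 1 (by simp)).mono_left nhdsWithin_le_nhds)
    tendsto_exp_neg_atTop_nhds_zero (integrableOn_inv_mul_exp_neg_sub_exp_neg ha hb)

theorem log_Gamma_add_one {x : ℝ} (hx : 0 < x) :
    log (Gamma (x + 1)) = log x + log (Gamma x) := by
  rw [Gamma_add_one hx.ne', log_mul hx.ne' (Gamma_pos_of_pos hx).ne']

theorem two_mul_log_Gamma_midpoint_le {a b : ℝ} (ha : 0 < a) (hb : 0 < b) :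
    2 * log (Gamma ((a + b) / 2)) ≤ log (Gamma a) + log (Gamma b) := by
  have h := convexOn_log_Gamma.2 ha hb (by norm_num : (0 : ℝ) ≤ 1 / 2)
    (by norm_num : (0 : ℝ) ≤ 1 / 2) (by norm_num)
  simp only [smul_eq_mul, Function.comp_apply] at h
  rw [show (a + b) / 2 = 1 / 2 * a + 1 / 2 * b by ring]
  linarith

end Real

noncomputable def logGammaDefect (x : ℝ) : ℝ :=
  log (Gamma (x - 1 / 2)) + log (Gamma (x + 1 / 2)) - 2 * log (Gamma x)

theorem log_Gamma_sq_div_eq_neg_logGammaDefect {x : ℝ} (hx : 1 / 2 < x) :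
    log (Gamma x ^ 2 / (Gamma (x - 1 / 2) * Gamma (x + 1 / 2))) = -logGammaDefect x := by
  have h₀ := Gamma_pos_of_pos (by linarith : 0 < x)
  have h₁ := Gamma_pos_of_pos (by linarith : 0 < x - 1 / 2)
  have h₂ := Gamma_pos_of_pos (by linarith : 0 < x + 1 / 2)
  rw [log_div (by positivity) (by positivity), log_mul h₁.ne' h₂.ne', log_pow, logGammaDefect]
  push_cast
  ring

theorem logGammaDefect_nonneg {x : ℝ} (hx : 1 / 2 < x) : 0 ≤ logGammaDefect x := by
  have h := two_mul_log_Gamma_midpoint_le (by linarith : 0 < x - 1 / 2)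
    (by linarith : 0 < x + 1 / 2)
  rw [show (x - 1 / 2 + (x + 1 / 2)) / 2 = x by ring] at h
  rw [logGammaDefect]
  linarith

theorem logGammaDefect_le {x : ℝ} (hx : 1 < x) : logGammaDefect x ≤ (2 * (x - 1))⁻¹ := by
  have hup := two_mul_log_Gamma_midpoint_le (by linarith : 0 < x) (by linarith : 0 < x + 1)
  have hlow := two_mul_log_Gamma_midpoint_le (by linarith : 0 < x - 1) (by linarith : 0 < x)
  rw [show (x + (x + 1)) / 2 = x + 1 / 2 by ring, log_Gamma_add_one (by linarith)] at hup
  rw [show (x - 1 + x) / 2 = x - 1 / 2 by ring] at hlow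
  have hrec : log (Gamma x) = log (x - 1) + log (Gamma (x - 1)) := by
    simpa using log_Gamma_add_one (by linarith : 0 < x - 1)
  have hlog : log x - log (x - 1) ≤ (x - 1)⁻¹ := by
    rw [← log_div (by positivity) (by linarith)]
    refine (log_le_sub_one_of_pos (by positivity)).trans_eq ?_
    field_simp [(by linarith : x - 1 ≠ 0)]
    ring
  rw [logGammaDefect, mul_inv]
  linarith

theorem tendsto_logGammaDefect_atTop : Tendsto logGammaDefect atTop (𝓝 0) := by
  have hbound : Tendsto (fun x : ℝ => (2 * (x - 1))⁻¹) atTop (𝓝 0) :=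
    ((tendsto_atTop_add_const_right _ (-1) tendsto_id).const_mul_atTop two_pos).inv_tendsto_atTop
  refine tendsto_of_tendsto_of_tendsto_of_le_of_le' tendsto_const_nhds hbound ?_ ?_
  · filter_upwards [eventually_gt_atTop (1 / 2)] with x hx using logGammaDefect_nonneg hx
  · filter_upwards [eventually_gt_atTop 1] with x hx using logGammaDefect_le hx

theorem logGammaDefect_sub_logGammaDefect_add_one {x : ℝ} (hx : 1 / 2 < x) :
    logGammaDefect x - logGammaDefect (x + 1) = 2 * log x - log (x - 1 / 2) - log (x + 1 / 2) := by
  have h₀ := log_Gamma_add_one (by linarith : 0 < x)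
  have h₁ := log_Gamma_add_one (by linarith : 0 < x - 1 / 2)
  have h₂ := log_Gamma_add_one (by linarith : 0 < x + 1 / 2)
  rw [show x - 1 / 2 + 1 = x + 1 - 1 / 2 by ring] at h₁
  rw [show x + 1 / 2 + 1 = x + 1 + 1 / 2 by ring] at h₂
  rw [logGammaDefect, logGammaDefect, h₀, h₁, h₂]
  ring

noncomputable def stepKernel (x s : ℝ) : ℝ := 4 * exp (-(4 * x * s)) * sinh s ^ 2 / s

theorem stepKernel_eq (x s : ℝ) :
    stepKernel x s = s⁻¹ * (exp (-((4 * x - 2) * s)) - exp (-(4 * x * s)))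
      - s⁻¹ * (exp (-(4 * x * s)) - exp (-((4 * x + 2) * s))) := by
  have h₁ : exp (-((4 * x - 2) * s)) = exp (-(4 * x * s)) * exp s * exp s := by
    rw [← exp_add, ← exp_add]; ring_nf
  have h₂ : exp (-((4 * x + 2) * s)) = exp (-(4 * x * s)) * exp (-s) * exp (-s) := by
    rw [← exp_add, ← exp_add]; ring_nf
  have h₃ : exp s * exp (-s) = 1 := by rw [← exp_add, add_neg_cancel, exp_zero]
  rw [stepKernel, sinh_eq, h₁, h₂]
  linear_combination (-2 * exp (-(4 * x * s)) * s⁻¹) * h₃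

theorem stepKernel_nonneg (x : ℝ) {s : ℝ} (hs : 0 ≤ s) : 0 ≤ stepKernel x s := by
  unfold stepKernel
  positivity

theorem integrableOn_stepKernel {x : ℝ} (hx : 1 / 2 < x) :
    IntegrableOn (stepKernel x) (Set.Ioi 0) := by
  rw [funext (stepKernel_eq x)]
  exact (integrableOn_inv_mul_exp_neg_sub_exp_neg (by linarith) (by linarith)).sub
    (integrableOn_inv_mul_exp_neg_sub_exp_neg (by linarith) (by linarith))

theorem integral_stepKernel {x : ℝ} (hx : 1 / 2 < x) :
    ∫ s in Set.Ioi 0, stepKernel x s = logGammaDefect x - logGammaDefect (x + 1) := by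
  simp_rw [stepKernel_eq]
  rw [integral_sub (integrableOn_inv_mul_exp_neg_sub_exp_neg (by linarith) (by linarith))
      (integrableOn_inv_mul_exp_neg_sub_exp_neg (by linarith) (by linarith)),
    integral_inv_mul_exp_neg_sub_exp_neg (by linarith) (by linarith),
    integral_inv_mul_exp_neg_sub_exp_neg (by linarith) (by linarith),
    logGammaDefect_sub_logGammaDefect_add_one hx,
    show 4 * x / (4 * x - 2) = x / (x - 1 / 2) by
      rw [div_eq_div_iff (by linarith) (by linarith)]; ring,
    show (4 * x + 2) / (4 * x) = (x + 1 / 2) / x by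
      rw [div_eq_div_iff (by linarith) (by linarith)]; ring,
    log_div (by linarith) (by linarith), log_div (by linarith) (by linarith)]
  ring

noncomputable def defectKernel (x s : ℝ) : ℝ := exp (-((4 * x - 2) * s)) * tanh s / s

theorem hasSum_stepKernel (x : ℝ) {s : ℝ} (hs : 0 < s) :
    HasSum (fun n : ℕ => stepKernel (x + n) s) (defectKernel x s) := by
  have hterm (n : ℕ) : stepKernel (x + n) s = stepKernel x s * exp (-(4 * s)) ^ n := by
    have h : exp (-(4 * (x + n) * s)) = exp (-(4 * x * s)) * exp (-(4 * s)) ^ n := by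
      rw [← exp_nat_mul, ← exp_add]; ring_nf
    rw [stepKernel, stepKernel, h]
    ring
  have hsum : stepKernel x s * (1 - exp (-(4 * s)))⁻¹ = defectKernel x s := by
    have h : exp (-(4 * x * s)) = exp (-((4 * x - 2) * s)) * exp (-(2 * s)) := by
      rw [← exp_add]; ring_nf
    rw [one_sub_exp_neg_four_mul, stepKernel, defectKernel, h, tanh_eq_sinh_div_cosh]
    field_simp [(sinh_pos_iff.2 hs).ne', (cosh_pos s).ne']
  have hr : exp (-(4 * s)) < 1 := exp_lt_one_iff.2 (by linarith)
  simpa only [hterm, hsum] using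
    (hasSum_geometric_of_lt_one (exp_pos _).le hr).mul_left (stepKernel x s)

theorem hasSum_logGammaDefect_sub {x : ℝ} (hx : 1 / 2 < x) :
    HasSum (fun n : ℕ => logGammaDefect (x + n) - logGammaDefect (x + n + 1))
      (logGammaDefect x) := by
  have hx' (n : ℕ) : 1 / 2 < x + n := by linarith [n.cast_nonneg (α := ℝ)]
  have hnonneg (n : ℕ) : 0 ≤ logGammaDefect (x + n) - logGammaDefect (x + n + 1) := by
    rw [← integral_stepKernel (hx' n)]
    exact setIntegral_nonneg measurableSet_Ioi fun s hs => stepKernel_nonneg _ (le_of_lt hs)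
  have hpartial (m : ℕ) : ∑ n ∈ range m, (logGammaDefect (x + n) - logGammaDefect (x + n + 1))
      = logGammaDefect x - logGammaDefect (x + m) := by
    simpa [add_assoc] using sum_range_sub' (fun n : ℕ => logGammaDefect (x + n)) m
  rw [hasSum_iff_tendsto_nat_of_nonneg hnonneg]
  simp_rw [hpartial]
  simpa using tendsto_const_nhds.sub (tendsto_logGammaDefect_atTop.comp
    (tendsto_atTop_add_const_left _ x tendsto_natCast_atTop_atTop))

theorem integral_defectKernel {x : ℝ} (hx : 1 / 2 < x) :
    ∫ s in Set.Ioi 0, defectKernel x s = logGammaDefect x := by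
  have hx' (n : ℕ) : 1 / 2 < x + n := by linarith [n.cast_nonneg (α := ℝ)]
  have hnorm (n : ℕ) :
      ∫ s in Set.Ioi 0, ‖stepKernel (x + n) s‖ = ∫ s in Set.Ioi 0, stepKernel (x + n) s :=
    setIntegral_congr_fun measurableSet_Ioi fun s hs =>
      Real.norm_of_nonneg (stepKernel_nonneg _ (le_of_lt hs))
  have hD := hasSum_logGammaDefect_sub hx
  simp_rw [← integral_stepKernel (hx' _)] at hD
  have h := hasSum_integral_of_summable_integral_norm (fun n => integrableOn_stepKernel (hx' n))
    (by simpa only [hnorm] using hD.summable)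
  rw [setIntegral_congr_fun measurableSet_Ioi fun s hs => (hasSum_stepKernel x hs).tsum_eq.symm]
  exact h.unique hD

theorem integrableOn_defectKernel {x : ℝ} (hx : 1 / 2 < x) :
    IntegrableOn (defectKernel x) (Set.Ioi 0) := by
  refine (exp_neg_integrableOn_Ioi 0 (by linarith : 0 < 4 * x - 2)).mono'
    (by unfold defectKernel; fun_prop : Measurable _).aestronglyMeasurable ?_
  refine (ae_restrict_iff' measurableSet_Ioi).2 (Eventually.of_forall fun s (hs : 0 < s) => ?_)
  have := tanh_nonneg hs.le
  rw [defectKernel, Real.norm_of_nonneg (by positivity), neg_mul, mul_div_assoc]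
  exact mul_le_of_le_one_right (exp_pos _).le ((div_le_one hs).2 (tanh_le_self hs.le))

theorem defectKernel_add_one (x s : ℝ) :
    defectKernel (x + 1) s
      = (exp (-(4 * x * s)) - exp (-(4 * (x + 1) * s))) / (4 * s * cosh s ^ 2) := by
  rcases eq_or_ne s 0 with rfl | hs
  · simp [defectKernel]
  have h : exp (-(4 * x * s)) - exp (-(4 * (x + 1) * s))
      = exp (-(4 * x * s)) * (1 - exp (-(4 * s))) := by
    rw [mul_sub, mul_one, ← exp_add]; ring_nf
  have h' : exp (-((4 * (x + 1) - 2) * s)) = exp (-(4 * x * s)) * exp (-(2 * s)) := by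
    rw [← exp_add]; ring_nf
  rw [h, one_sub_exp_neg_four_mul, defectKernel, h', tanh_eq_sinh_div_cosh]
  field_simp [(cosh_pos s).ne']

theorem sum_Icc_defectKernel (N : ℕ) (s : ℝ) :
    ∑ k ∈ Icc 1 N, defectKernel k s = (1 - exp (-(4 * N * s))) / (4 * s * cosh s ^ 2) := by
  induction N with
  | zero => simp
  | succ N ih =>
    rw [sum_Icc_succ_top (by omega), ih, Nat.cast_succ, defectKernel_add_one]
    ring

noncomputable def tanhSqKernel (a s : ℝ) : ℝ := exp (-(a * s)) * tanh s ^ 2 / s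

theorem tanhSqKernel_nonneg (a : ℝ) {s : ℝ} (hs : 0 ≤ s) : 0 ≤ tanhSqKernel a s := by
  unfold tanhSqKernel
  positivity

theorem tanhSqKernel_le_exp (a : ℝ) {s : ℝ} (hs : 0 < s) :
    tanhSqKernel a s ≤ exp (-(a * s)) := by
  rw [tanhSqKernel, mul_div_assoc]
  exact mul_le_of_le_one_right (exp_pos _).le ((div_le_one hs).2 (tanh_sq_le_self hs.le))

theorem integrableOn_tanhSqKernel {a : ℝ} (ha : 0 < a) :
    IntegrableOn (tanhSqKernel a) (Set.Ioi 0) := by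
  refine (exp_neg_integrableOn_Ioi 0 ha).mono'
    (by unfold tanhSqKernel; fun_prop : Measurable _).aestronglyMeasurable ?_
  refine (ae_restrict_iff' measurableSet_Ioi).2 (Eventually.of_forall fun s (hs : 0 < s) => ?_)
  rw [Real.norm_of_nonneg (tanhSqKernel_nonneg a (le_of_lt hs)), neg_mul]
  exact tanhSqKernel_le_exp a hs

theorem tendsto_integral_tanhSqKernel_atTop :
    Tendsto (fun a => ∫ s in Set.Ioi 0, tanhSqKernel a s) atTop (𝓝 0) := by
  refine tendsto_of_tendsto_of_tendsto_of_le_of_le' tendsto_const_nhds tendsto_inv_atTop_zero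
    ?_ ?_ <;> filter_upwards [eventually_gt_atTop 0] with a ha
  · exact setIntegral_nonneg measurableSet_Ioi fun s hs => tanhSqKernel_nonneg a (le_of_lt hs)
  · calc ∫ s in Set.Ioi 0, tanhSqKernel a s ≤ ∫ s in Set.Ioi 0, exp (-a * s) :=
          setIntegral_mono_on (integrableOn_tanhSqKernel ha) (exp_neg_integrableOn_Ioi 0 ha)
            measurableSet_Ioi fun s hs => (tanhSqKernel_le_exp a hs).trans_eq (by rw [neg_mul])
      _ = a⁻¹ := by
          rw [integral_exp_mul_Ioi (by linarith), mul_zero, exp_zero, neg_div, div_neg, neg_neg,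
            one_div]

noncomputable def sechKernel (s : ℝ) : ℝ := 1 / s * (exp (-4 * s) - 1 / cosh s ^ 2)

theorem one_sub_exp_neg_div_cosh_sq_eq (a s : ℝ) :
    (1 - exp (-(a * s))) / (4 * s * cosh s ^ 2)
      = (tanhSqKernel a s - sechKernel s + s⁻¹ * (exp (-(4 * s)) - exp (-(a * s)))) / 4 := by
  rcases eq_or_ne s 0 with rfl | hs
  · simp [tanhSqKernel, sechKernel]
  have h := cosh_sq s
  rw [tanhSqKernel, sechKernel, tanh_eq_sinh_div_cosh, neg_mul]
  field_simp [(cosh_pos s).ne']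
  linear_combination exp (-(a * s)) * h

theorem integrableOn_sechKernel : IntegrableOn sechKernel (Set.Ioi 0) := by
  have h (s : ℝ) : sechKernel s = tanhSqKernel 4 s - 4 * defectKernel 1 s := by
    have h₁ := sum_Icc_defectKernel 1 s
    rw [one_sub_exp_neg_div_cosh_sq_eq] at h₁
    simp only [Icc_self, sum_singleton, Nat.cast_one, mul_one, sub_self, mul_zero,
      add_zero] at h₁
    linarith
  rw [funext h]
  exact (integrableOn_tanhSqKernel four_pos).sub
    ((integrableOn_defectKernel (by norm_num)).const_mul 4)

theorem sum_Icc_logGammaDefect_eq {N : ℕ} (hN : 0 < N) :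
    ∑ k ∈ Icc 1 N, logGammaDefect k = ((∫ s in Set.Ioi 0, tanhSqKernel (4 * N) s)
      - (∫ s in Set.Ioi 0, sechKernel s) + log N) / 4 := by
  have hN' : (0 : ℝ) < 4 * N := by positivity
  have hk : ∀ k ∈ Icc 1 N, (1 : ℝ) / 2 < k := fun k hk => by
    have : (1 : ℝ) ≤ k := by exact_mod_cast (mem_Icc.1 hk).1
    linarith
  calc ∑ k ∈ Icc 1 N, logGammaDefect k
      = ∑ k ∈ Icc 1 N, ∫ s in Set.Ioi 0, defectKernel k s :=
        sum_congr rfl fun k hk' => (integral_defectKernel (hk k hk')).symm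
    _ = ∫ s in Set.Ioi 0, ∑ k ∈ Icc 1 N, defectKernel k s :=
        (integral_finsetSum _ fun k hk' => integrableOn_defectKernel (hk k hk')).symm
    _ = ∫ s in Set.Ioi 0, (tanhSqKernel (4 * N) s - sechKernel s
          + s⁻¹ * (exp (-(4 * s)) - exp (-(4 * N * s)))) / 4 := by
        simp_rw [sum_Icc_defectKernel, one_sub_exp_neg_div_cosh_sq_eq]
    _ = _ := by
        have hT := integrableOn_tanhSqKernel hN'
        rw [integral_div, integral_add (f := fun s => tanhSqKernel (4 * N) s - sechKernel s)
          (hT.sub integrableOn_sechKernel) (integrableOn_inv_mul_exp_neg_sub_exp_neg four_pos hN'),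
          integral_sub hT integrableOn_sechKernel,
          integral_inv_mul_exp_neg_sub_exp_neg four_pos hN', mul_div_cancel_left₀ _ four_ne_zero]

/-- First-order asymptotics of `φ_N = -∑_{k=1}^N log(Γ(k)²/(Γ(k-1/2)Γ(k+1/2)))`:
the improper integral `∫_0^∞ (1/t)(e^{-4t} - cosh⁻²t) dt` converges and
`φ_N - (1/4) log N` tends to `-(1/4)` times this integral. -/
theorem stmt15 (φ : ℕ → ℝ)
    (hφ : ∀ N : ℕ, φ N = -∑ k ∈ Finset.Icc 1 N,
      Real.log (Real.Gamma (k : ℝ) ^ 2 /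
        (Real.Gamma ((k : ℝ) - 1 / 2) * Real.Gamma ((k : ℝ) + 1 / 2)))) :
    MeasureTheory.IntegrableOn
        (fun t : ℝ => (1 / t) * (Real.exp (-4 * t) - 1 / Real.cosh t ^ 2)) (Set.Ioi 0) ∧
      Tendsto (fun N : ℕ => φ N - (1 / 4) * Real.log N) atTop
        (nhds (-(1 / 4) *
          ∫ t in Set.Ioi (0 : ℝ), (1 / t) * (Real.exp (-4 * t) - 1 / Real.cosh t ^ 2))) := by
  refine ⟨integrableOn_sechKernel, ?_⟩
  have hφ' (N : ℕ) : φ N = ∑ k ∈ Icc 1 N, logGammaDefect k := by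
    rw [hφ, ← sum_neg_distrib]
    refine sum_congr rfl fun k hk => ?_
    have : (1 : ℝ) ≤ k := by exact_mod_cast (mem_Icc.1 hk).1
    rw [log_Gamma_sq_div_eq_neg_logGammaDefect (by linarith), neg_neg]
  have hT := tendsto_integral_tanhSqKernel_atTop.comp
    (tendsto_natCast_atTop_atTop.const_mul_atTop (four_pos : (0 : ℝ) < 4))
  have hlim := (hT.sub_const (∫ s in Set.Ioi 0, sechKernel s)).div_const 4
  rw [show (0 - ∫ s in Set.Ioi 0, sechKernel s) / 4 = -(1 / 4) * ∫ s in Set.Ioi 0, sechKernel s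
    by ring] at hlim
  refine hlim.congr' ?_
  filter_upwards [eventually_gt_atTop 0] with N hN
  rw [Function.comp_apply, hφ', sum_Icc_logGammaDefect_eq hN]
  ring
end

section
/- Let R be a commutative ring, n ≥ 0 an integer, A an n×n matrix over R, u, v ∈ Rⁿ, and w ∈ R. Consider the (n+1)×(n+1) bordered matrix W = [[A, u],[vᵀ, w]] (i.e. W_{jk} = A_{jk} for j,k ≤ n, W_{j,n+1} = u_j, W_{n+1,k} = v_k, W_{n+1,n+1} = w). Then det W = (w + 1)·det A − det( A + u vᵀ ), where u vᵀ is the n×n matrix with entries u_j v_k. -/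
open Matrix

private theorem updateRow_updateRow' {m n α : Type*} [DecidableEq m]
    (M : Matrix m n α) (i : m) (b c : n → α) :
    (M.updateRow i b).updateRow i c = M.updateRow i c := by
  ext r j
  rcases eq_or_ne r i with h | h <;> simp [Matrix.updateRow_apply, h]

/-- Bordered determinant identity: for the `(n+1)×(n+1)` matrix `W = [[A, u],[vᵀ, w]]`,
`det W = (w + 1) det A - det(A + u vᵀ)`. -/
theorem stmt19 (R : Type*) [CommRing R] (n : ℕ) (A : Matrix (Fin n) (Fin n) R)
    (u v : Fin n → R) (w : R) :
    Matrix.det (Matrix.fromBlocks A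
        (Matrix.of fun j (_ : Unit) => u j)
        (Matrix.of fun (_ : Unit) k => v k)
        (Matrix.of fun (_ : Unit) (_ : Unit) => w)) =
      (w + 1) * A.det - Matrix.det (A + Matrix.of fun j k => u j * v k) := by
  set B : Matrix (Fin n) Unit R := Matrix.of fun j (_ : Unit) => u j with hB
  set M : Matrix (Fin n ⊕ Unit) (Fin n ⊕ Unit) R :=
    Matrix.fromBlocks A B (Matrix.of fun (_ : Unit) k => v k)
      (Matrix.of fun (_ : Unit) (_ : Unit) => w) with hM
  have key : M = M.updateRow (Sum.inr ())
      ((w + 1) • Sum.elim (0 : Fin n → R) (fun _ => (1 : R)) +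
        (-1 : R) • Sum.elim (fun k => -v k) (fun _ => (1 : R))) := by
    ext i j
    rcases i with i | i
    · simp [Matrix.updateRow_apply]
    · rcases j with j | j <;>
        simp [Matrix.updateRow_apply, hM, Matrix.fromBlocks_apply₂₁,
          Matrix.fromBlocks_apply₂₂]
  have h1 : M.updateRow (Sum.inr ()) (Sum.elim (0 : Fin n → R) (fun _ => (1 : R))) =
      Matrix.fromBlocks A B (0 : Matrix Unit (Fin n) R) (1 : Matrix Unit Unit R) := by
    ext i j
    rcases i with i | i <;> rcases j with j | j <;>
      simp [Matrix.updateRow_apply, hM, Matrix.one_apply]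
  have h2 : M.updateRow (Sum.inr ()) (Sum.elim (fun k => -v k) (fun _ => (1 : R))) =
      Matrix.fromBlocks A B (Matrix.of fun (_ : Unit) k => -v k) (1 : Matrix Unit Unit R) := by
    ext i j
    rcases i with i | i <;> rcases j with j | j <;>
      simp [Matrix.updateRow_apply, hM, Matrix.one_apply]
  calc M.det
      = (w + 1) *
          (M.updateRow (Sum.inr ()) (Sum.elim (0 : Fin n → R) (fun _ => (1 : R)))).det +
        (-1 : R) *
          (M.updateRow (Sum.inr ()) (Sum.elim (fun k => -v k) (fun _ => (1 : R)))).det := by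
        rw [key, Matrix.det_updateRow_add, Matrix.det_updateRow_smul, Matrix.det_updateRow_smul,
          updateRow_updateRow', updateRow_updateRow']
    _ = (w + 1) * A.det - Matrix.det (A + Matrix.of fun j k => u j * v k) := by
        rw [h1, h2, Matrix.det_fromBlocks_one₂₂, Matrix.det_fromBlocks_one₂₂]
        have : A - B * Matrix.of (fun (_ : Unit) k => -v k) =
            A + Matrix.of fun j k => u j * v k := by
          ext i j
          simp [Matrix.mul_apply, hB, sub_eq_add_neg]
        have h0 : A - B * (0 : Matrix Unit (Fin n) R) = A := by simp
        rw [this, h0]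
        ring
end
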